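/- arXiv:2208.08771 — 9 statements merged into one kernel-verified Lean document; each statement's English description precedes it below -/
import Mathlib

section
/- For every v ∈ ℝ^N, the vector r = Hv satisfies J₀ r = v + (0, 0, Σ_{j=0}^{ℓ−1} γ_j [ᾱ_j(z⁰∘Δx^j + x⁰∘Δz^j) − (x^{j+1}∘z^{j+1} − x^j∘z^j)]), where γ_j = y_jᵀ (V_{j+1}V_{j+2}⋯V_{ℓ−1}) v / ρ_j for j = 0,…,ℓ−1; that is, applying the Broyden 'bad' approximate inverse H amounts to solving a linear system with the fixed matrix J₀ and a right-hand side modified only in the third block. -/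
/-!
Write `P j = V j * ⋯ * V (ℓ - 1)`. Since each `V j` is `1` minus a rank-one matrix, the product
telescopes: `P 0 = 1 - ∑ ρⱼ⁻¹ yⱼ yⱼᵀ P (j + 1)`. Hence
`J₀ H = 1 + ∑ ρⱼ⁻¹ (J₀ sⱼ - yⱼ) yⱼᵀ P (j + 1)`, i.e. `J₀ H v = v + ∑ γⱼ (J₀ sⱼ - yⱼ)`.
The first two blocks of the secant residual `J₀ sⱼ - yⱼ` vanish because those rows of the
Newton system are linear in the step; in the third block `J₀` linearizes `x ∘ z` at `(x⁰, z⁰)`,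
while `yⱼ` records the actual change of `x ∘ z`.
-/

open scoped BigOperators

/-- Block vector in `ℝ^{2n+m} = ℝ^n × ℝ^m × ℝ^n`. -/
def blk {n m : ℕ} (u : Fin n → ℝ) (v : Fin m → ℝ) (w : Fin n → ℝ) :
    (Fin n ⊕ Fin m ⊕ Fin n) → ℝ :=
  Sum.elim u (Sum.elim v w)

/-- Dot product of finitely-indexed real vectors. -/
def dotp {ι : Type*} [Fintype ι] (u v : ι → ℝ) : ℝ := ∑ i, u i * v i

/-- The fixed unreduced interior-point Jacobian
`J₀ = [[0, Aᵀ, I], [A, 0, 0], [Z⁰, 0, X⁰]]`. -/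
def J0 {n m : ℕ} (A : Matrix (Fin m) (Fin n) ℝ) (x0 z0 : Fin n → ℝ) :
    Matrix (Fin n ⊕ Fin m ⊕ Fin n) (Fin n ⊕ Fin m ⊕ Fin n) ℝ :=
  Matrix.of fun p q =>
    match p, q with
    | Sum.inl _, Sum.inl _ => 0
    | Sum.inl i, Sum.inr (Sum.inl j) => A j i
    | Sum.inl i, Sum.inr (Sum.inr j) => if i = j then 1 else 0
    | Sum.inr (Sum.inl i), Sum.inl j => A i j
    | Sum.inr (Sum.inl _), Sum.inr _ => 0
    | Sum.inr (Sum.inr i), Sum.inl j => if i = j then z0 i else 0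
    | Sum.inr (Sum.inr _), Sum.inr (Sum.inl _) => 0
    | Sum.inr (Sum.inr i), Sum.inr (Sum.inr j) => if i = j then x0 i else 0

/-- Ordered matrix product `V a * V (a+1) * ⋯ * V (b-1)`. -/
def matProd {N : Type*} [Fintype N] [DecidableEq N]
    (V : ℕ → Matrix N N ℝ) (a b : ℕ) : Matrix N N ℝ :=
  ((List.range (b - a)).map (fun t => V (a + t))).prod

open Matrix Finset

section

variable {S : Type*} [Fintype S] [DecidableEq S]

theorem matProd_self (V : ℕ → Matrix S S ℝ) (a : ℕ) : matProd V a a = 1 := by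
  simp [matProd]

theorem matProd_eq_mul_matProd_succ (V : ℕ → Matrix S S ℝ) {a b : ℕ} (h : a < b) :
    matProd V a b = V a * matProd V (a + 1) b := by
  obtain ⟨k, hk⟩ : ∃ k, b - a = k + 1 := ⟨b - (a + 1), by omega⟩
  have hk' : b - (a + 1) = k := by omega
  simp only [matProd, hk, hk', List.range_succ_eq_map, List.map_cons, List.prod_cons,
    List.map_map, Function.comp_def, add_zero, Nat.succ_eq_add_one, add_assoc, add_comm 1]

theorem matProd_one_sub_eq (V W : ℕ → Matrix S S ℝ) (hV : ∀ j, V j = 1 - W j) {a b : ℕ}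
    (hab : a ≤ b) :
    matProd V a b = 1 - ∑ j ∈ Ico a b, W j * matProd V (j + 1) b := by
  induction hab using Nat.decreasingInduction with
  | self => simp [matProd_self]
  | of_succ a h ih =>
    rw [matProd_eq_mul_matProd_succ V h, hV, sub_mul, one_mul, sum_eq_sum_Ico_succ_bot h]
    nth_rw 1 [ih]
    abel

noncomputable def broydenBadInv (J : Matrix S S ℝ) (c : ℕ → ℝ) (s y : ℕ → S → ℝ)
    (V : ℕ → Matrix S S ℝ) (ℓ : ℕ) : Matrix S S ℝ :=
  J⁻¹ * matProd V 0 ℓ + ∑ j ∈ range ℓ, c j • (vecMulVec (s j) (y j) * matProd V (j + 1) ℓ)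

theorem mul_broydenBadInv (J : Matrix S S ℝ) (hJ : IsUnit J.det) (c : ℕ → ℝ)
    (s y : ℕ → S → ℝ) (V : ℕ → Matrix S S ℝ)
    (hV : ∀ j, V j = 1 - c j • vecMulVec (y j) (y j)) (ℓ : ℕ) :
    J * broydenBadInv J c s y V ℓ
      = 1 + ∑ j ∈ range ℓ, c j • (vecMulVec (J *ᵥ s j - y j) (y j) * matProd V (j + 1) ℓ) := by
  rw [broydenBadInv, mul_add, ← Matrix.mul_assoc, mul_nonsing_inv _ hJ, Matrix.one_mul,
    matProd_one_sub_eq V _ hV (Nat.zero_le ℓ), ← range_eq_Ico, mul_sum]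
  simp only [Matrix.mul_smul, ← Matrix.mul_assoc, mul_vecMulVec, sub_vecMulVec, Matrix.sub_mul,
    smul_sub, sum_sub_distrib, Matrix.smul_mul]
  abel

theorem mulVec_broydenBadInv_mulVec (J : Matrix S S ℝ) (hJ : IsUnit J.det) (c : ℕ → ℝ)
    (s y : ℕ → S → ℝ) (V : ℕ → Matrix S S ℝ)
    (hV : ∀ j, V j = 1 - c j • vecMulVec (y j) (y j)) (ℓ : ℕ) (v : S → ℝ) :
    J *ᵥ (broydenBadInv J c s y V ℓ *ᵥ v)
      = v + ∑ j ∈ range ℓ, (c j * (y j ⬝ᵥ (matProd V (j + 1) ℓ *ᵥ v))) • (J *ᵥ s j - y j) := by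
  rw [mulVec_mulVec, mul_broydenBadInv J hJ c s y V hV, add_mulVec, one_mulVec, sum_mulVec]
  congr 1
  refine sum_congr rfl fun j _ => ?_
  rw [smul_mulVec, ← mulVec_mulVec, vecMulVec_mulVec, op_smul_eq_smul, smul_smul]

end

theorem blk_sub {n m : ℕ} (u u' : Fin n → ℝ) (w w' : Fin m → ℝ) (t t' : Fin n → ℝ) :
    blk u w t - blk u' w' t' = blk (u - u') (w - w') (t - t') := by
  simp only [blk, Sum.elim_sub_sub]

theorem J0_mulVec_blk {n m : ℕ} (A : Matrix (Fin m) (Fin n) ℝ) (x0 z0 u t : Fin n → ℝ)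
    (w : Fin m → ℝ) :
    J0 A x0 z0 *ᵥ blk u w t = blk (Aᵀ *ᵥ w + t) (A *ᵥ u) (z0 * u + x0 * t) := by
  funext p
  rcases p with i | i | i <;>
    simp [J0, blk, mulVec, dotProduct, Fintype.sum_sum_type, transpose_apply]

theorem J0_mulVec_blk_sub_blk {n m : ℕ} (A : Matrix (Fin m) (Fin n) ℝ) (x0 z0 : Fin n → ℝ)
    (α : ℝ) (dx dz w : Fin n → ℝ) (dl : Fin m → ℝ) :
    J0 A x0 z0 *ᵥ blk (α • dx) (α • dl) (α • dz) - blk (α • (Aᵀ *ᵥ dl + dz)) (α • (A *ᵥ dx)) w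
      = blk 0 0 (α • (z0 * dx + x0 * dz) - w) := by
  rw [J0_mulVec_blk, blk_sub, mulVec_smul, mulVec_smul, smul_add, mul_smul_comm, mul_smul_comm,
    smul_add, sub_self, sub_self]

theorem broyden_bad_third_block_rhs_general
    (n m ℓ : ℕ)
    (A : Matrix (Fin m) (Fin n) ℝ)
    (x0 z0 : Fin n → ℝ)
    (hJ : IsUnit (J0 A x0 z0).det)
    (αb : ℕ → ℝ)
    (Δx Δz : ℕ → Fin n → ℝ) (Δlam : ℕ → Fin m → ℝ)
    (x z : ℕ → Fin n → ℝ)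
    (s y : ℕ → (Fin n ⊕ Fin m ⊕ Fin n) → ℝ)
    (hs : ∀ j, s j = blk (fun i => αb j * Δx j i) (fun i => αb j * Δlam j i)
      (fun i => αb j * Δz j i))
    (hy : ∀ j, y j = blk
      (fun i => αb j * ((Matrix.transpose A).mulVec (Δlam j) i + Δz j i))
      (fun i => αb j * A.mulVec (Δx j) i)
      (fun i => x (j + 1) i * z (j + 1) i - x j i * z j i))
    (ρ : ℕ → ℝ)
    (V : ℕ → Matrix (Fin n ⊕ Fin m ⊕ Fin n) (Fin n ⊕ Fin m ⊕ Fin n) ℝ)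
    (hV : ∀ j, V j = 1 - (ρ j)⁻¹ • Matrix.vecMulVec (y j) (y j))
    (H : Matrix (Fin n ⊕ Fin m ⊕ Fin n) (Fin n ⊕ Fin m ⊕ Fin n) ℝ)
    (hH : H = (J0 A x0 z0)⁻¹ * matProd V 0 ℓ
      + ∑ j ∈ Finset.range ℓ,
          (ρ j)⁻¹ • (Matrix.vecMulVec (s j) (y j) * matProd V (j + 1) ℓ))
    (v r : (Fin n ⊕ Fin m ⊕ Fin n) → ℝ)
    (hr : r = H.mulVec v)
    (γ : ℕ → ℝ)
    (hγ : ∀ j, γ j = dotp (Matrix.vecMul (y j) (matProd V (j + 1) ℓ)) v / ρ j) :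
    (J0 A x0 z0).mulVec r
      = v + blk (fun _ => 0) (fun _ => 0)
          (fun i => ∑ j ∈ Finset.range ℓ,
            γ j * (αb j * (z0 i * Δx j i + x0 i * Δz j i)
              - (x (j + 1) i * z (j + 1) i - x j i * z j i))) := by
  have hcoeff : ∀ j, (ρ j)⁻¹ * (y j ⬝ᵥ (matProd V (j + 1) ℓ *ᵥ v)) = γ j := fun j => by
    rw [hγ, dotp, ← dotProduct.eq_def, ← dotProduct_mulVec, inv_mul_eq_div]
  have hsecant : ∀ j, J0 A x0 z0 *ᵥ s j - y j = blk 0 0 (fun i =>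
      αb j * (z0 i * Δx j i + x0 i * Δz j i) - (x (j + 1) i * z (j + 1) i - x j i * z j i)) :=
    fun j => by
      rw [hs, hy]
      exact J0_mulVec_blk_sub_blk A x0 z0 (αb j) (Δx j) (Δz j) _ (Δlam j)
  obtain rfl : H = broydenBadInv (J0 A x0 z0) (fun j => (ρ j)⁻¹) s y V ℓ := hH
  rw [hr, mulVec_broydenBadInv_mulVec _ hJ _ s y V hV]
  simp only [hcoeff, hsecant]
  congr 1
  funext p
  rcases p with i | i | i <;> simp [blk, Finset.sum_apply]

/-- Broyden "bad" update: applying the approximate inverse `H` built from `ℓ`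
rank-one updates of `J₀⁻¹` to any `v` amounts to solving a linear system with
the fixed matrix `J₀` and a right-hand side modified only in the third block. -/
theorem broyden_bad_third_block_rhs
    (n m ℓ : ℕ) (hn : 1 ≤ n) (hm : 1 ≤ m) (hℓ : 1 ≤ ℓ)
    (A : Matrix (Fin m) (Fin n) ℝ)
    (x0 z0 : Fin n → ℝ) (hx0 : ∀ i, 0 < x0 i) (hz0 : ∀ i, 0 < z0 i)
    (hJ : IsUnit (J0 A x0 z0).det)
    (αb : ℕ → ℝ)
    (Δx Δz : ℕ → Fin n → ℝ) (Δlam : ℕ → Fin m → ℝ)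
    (x z : ℕ → Fin n → ℝ)
    (hx : x 0 = x0) (hz : z 0 = z0)
    (hxs : ∀ j < ℓ, x (j + 1) = fun i => x j i + αb j * Δx j i)
    (hzs : ∀ j < ℓ, z (j + 1) = fun i => z j i + αb j * Δz j i)
    (s y : ℕ → (Fin n ⊕ Fin m ⊕ Fin n) → ℝ)
    (hs : ∀ j, s j = blk (fun i => αb j * Δx j i) (fun i => αb j * Δlam j i)
      (fun i => αb j * Δz j i))
    (hy : ∀ j, y j = blk
      (fun i => αb j * ((Matrix.transpose A).mulVec (Δlam j) i + Δz j i))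
      (fun i => αb j * A.mulVec (Δx j) i)
      (fun i => x (j + 1) i * z (j + 1) i - x j i * z j i))
    (ρ : ℕ → ℝ) (hρdef : ∀ j, ρ j = dotp (y j) (y j))
    (hρ : ∀ j < ℓ, ρ j ≠ 0)
    (V : ℕ → Matrix (Fin n ⊕ Fin m ⊕ Fin n) (Fin n ⊕ Fin m ⊕ Fin n) ℝ)
    (hV : ∀ j, V j = 1 - (ρ j)⁻¹ • Matrix.vecMulVec (y j) (y j))
    (H : Matrix (Fin n ⊕ Fin m ⊕ Fin n) (Fin n ⊕ Fin m ⊕ Fin n) ℝ)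
    (hH : H = (J0 A x0 z0)⁻¹ * matProd V 0 ℓ
      + ∑ j ∈ Finset.range ℓ,
          (ρ j)⁻¹ • (Matrix.vecMulVec (s j) (y j) * matProd V (j + 1) ℓ))
    (v r : (Fin n ⊕ Fin m ⊕ Fin n) → ℝ)
    (hr : r = H.mulVec v)
    (γ : ℕ → ℝ)
    (hγ : ∀ j, γ j = dotp (Matrix.vecMul (y j) (matProd V (j + 1) ℓ)) v / ρ j) :
    (J0 A x0 z0).mulVec r
      = v + blk (fun _ => 0) (fun _ => 0)
          (fun i => ∑ j ∈ Finset.range ℓ,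
            γ j * (αb j * (z0 i * Δx j i + x0 i * Δz j i)
              - (x (j + 1) i * z (j + 1) i - x j i * z j i))) :=
  broyden_bad_third_block_rhs_general n m ℓ A x0 z0 hJ αb Δx Δz Δlam x z s y hs hy ρ V hV H hH v r
    hr γ hγ
end

section
/- Under the feasible two-step setup, the average complementarity gap after the quasi-Newton step satisfies μ(ᾱ) = (1 − ᾱ(1 − σ_{k+1})) μ_{k+1}. -/
/-!
Feasible directions are orthogonal: `A Δx = 0` and `Δz = -Aᵀ Δλ` give `Δx ⬝ Δz = 0`, for every
pair among the two steps. Hence a step changes `xᵀz` exactly by its linear term, the Broyden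
correction (which is `-ᾱ_k² Δx ∘ Δz` componentwise) sums to zero, and the linear term of the
quasi-Newton step at `(x^{k+1}, z^{k+1})` equals the one at `(x^k, z^k)`, namely
`n σ_{k+1} μ_{k+1} - (x^{k+1})ᵀ z^{k+1}`.
-/

open Matrix

section DotProduct

variable {R ι κ : Type*} [CommRing R] [Fintype ι] [Fintype κ]

theorem dotProduct_eq_zero_of_mulVec_eq_zero_of_add_eq_zero {A : Matrix κ ι R} {u w : ι → R}
    {lam : κ → R} (hu : A *ᵥ u = 0) (hw : Aᵀ *ᵥ lam + w = 0) : u ⬝ᵥ w = 0 := by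
  rw [eq_neg_of_add_eq_zero_right hw, dotProduct_neg, dotProduct_mulVec, vecMul_transpose, hu,
    zero_dotProduct, neg_zero]

theorem add_smul_dotProduct_add_smul {x z dx dz : ι → R} (t : R) (h : dx ⬝ᵥ dz = 0) :
    (x + t • dx) ⬝ᵥ (z + t • dz) = x ⬝ᵥ z + t * (z ⬝ᵥ dx + x ⬝ᵥ dz) := by
  simp only [add_dotProduct, dotProduct_add, smul_dotProduct, dotProduct_smul, h, smul_eq_mul,
    dotProduct_comm dx z]
  ring

theorem add_smul_dotProduct_add_add_smul_dotProduct {x z dx dz dx' dz' : ι → R} (t : R)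
    (h₁ : dx' ⬝ᵥ dz = 0) (h₂ : dx ⬝ᵥ dz' = 0) :
    (z + t • dz) ⬝ᵥ dx' + (x + t • dx) ⬝ᵥ dz' = z ⬝ᵥ dx' + x ⬝ᵥ dz' := by
  simp only [add_dotProduct, smul_dotProduct, dotProduct_comm dz, h₁, h₂, smul_zero, add_zero]

end DotProduct

theorem natCast_mul_sum_div {K : Type*} [Field K] [CharZero K] {n : ℕ} (f : Fin n → K) :
    (n : K) * ((∑ i, f i) / n) = ∑ i, f i :=
  mul_div_cancel_of_imp' fun h => by
    obtain rfl := Nat.cast_eq_zero.mp h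
    simp

theorem qn_mu_decrease_general
    (n m : ℕ)
    (A : Matrix (Fin m) (Fin n) ℝ)
    (xk zk : Fin n → ℝ)
    (σk1 αk α γ₁ : ℝ)
    (Δx Δz Δx' Δz' : Fin n → ℝ) (Δlam Δlam' : Fin m → ℝ)
    (hAx : A.mulVec Δx = 0)
    (hAl : (Matrix.transpose A).mulVec Δlam + Δz = 0)
    (xk1 zk1 : Fin n → ℝ)
    (hxk1 : xk1 = fun i => xk i + αk * Δx i)
    (hzk1 : zk1 = fun i => zk i + αk * Δz i)
    (μk1 : ℝ) (hμk1 : μk1 = (∑ i, xk1 i * zk1 i) / n)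
    (hAx' : A.mulVec Δx' = 0)
    (hAl' : (Matrix.transpose A).mulVec Δlam' + Δz' = 0)
    (hQN : ∀ i, zk i * Δx' i + xk i * Δz' i
      = σk1 * μk1 - xk1 i * zk1 i
        + γ₁ * (αk * (zk i * Δx i + xk i * Δz i) - (xk1 i * zk1 i - xk i * zk i)))
    (xk2 zk2 : Fin n → ℝ)
    (hxk2 : xk2 = fun i => xk1 i + α * Δx' i)
    (hzk2 : zk2 = fun i => zk1 i + α * Δz' i)
    (μα : ℝ) (hμα : μα = (∑ i, xk2 i * zk2 i) / n) :
    μα = (1 - α * (1 - σk1)) * μk1 := by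
  replace hxk1 : xk1 = xk + αk • Δx := hxk1
  replace hzk1 : zk1 = zk + αk • Δz := hzk1
  replace hxk2 : xk2 = xk1 + α • Δx' := hxk2
  replace hzk2 : zk2 = zk1 + α • Δz' := hzk2
  have hS1 : xk1 ⬝ᵥ zk1 = xk ⬝ᵥ zk + αk * (zk ⬝ᵥ Δx + xk ⬝ᵥ Δz) := by
    rw [hxk1, hzk1, add_smul_dotProduct_add_smul αk
      (dotProduct_eq_zero_of_mulVec_eq_zero_of_add_eq_zero hAx hAl)]
  have hnμ : n * μk1 = xk1 ⬝ᵥ zk1 := by rw [hμk1, natCast_mul_sum_div]; rfl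
  have hres : zk ⬝ᵥ Δx' + xk ⬝ᵥ Δz' = n * (σk1 * μk1) - xk1 ⬝ᵥ zk1 := by
    have hsum := Finset.sum_congr rfl fun i (_ : i ∈ Finset.univ) => hQN i
    simp only [Finset.sum_add_distrib, Finset.sum_sub_distrib, ← Finset.mul_sum,
      Finset.sum_const, Finset.card_univ, Fintype.card_fin, nsmul_eq_mul] at hsum
    change zk ⬝ᵥ Δx' + xk ⬝ᵥ Δz' = _ - xk1 ⬝ᵥ zk1
      + γ₁ * (αk * (zk ⬝ᵥ Δx + xk ⬝ᵥ Δz) - (xk1 ⬝ᵥ zk1 - xk ⬝ᵥ zk)) at hsum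
    rw [hS1] at hsum ⊢
    linear_combination hsum
  have hS2 : xk2 ⬝ᵥ zk2 = (1 - α * (1 - σk1)) * (xk1 ⬝ᵥ zk1) := by
    rw [hxk2, hzk2, add_smul_dotProduct_add_smul α
      (dotProduct_eq_zero_of_mulVec_eq_zero_of_add_eq_zero hAx' hAl'), hzk1, hxk1,
      add_smul_dotProduct_add_add_smul_dotProduct αk
        (dotProduct_eq_zero_of_mulVec_eq_zero_of_add_eq_zero hAx' hAl)
        (dotProduct_eq_zero_of_mulVec_eq_zero_of_add_eq_zero hAx hAl'),
      ← hxk1, ← hzk1, hres, ← hnμ]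
    ring
  rw [hμα, hμk1]
  change xk2 ⬝ᵥ zk2 / n = _ * (xk1 ⬝ᵥ zk1 / n)
  rw [hS2, mul_div_assoc]

/-- Feasible two-step setup: after a Newton step with step size `αk` followed by a
quasi-Newton step with step size `α`, the average complementarity gap satisfies
`μ(α) = (1 - α (1 - σk1)) μk1`. -/
theorem qn_mu_decrease
    (n m : ℕ) (hn : 1 ≤ n) (hm : 1 ≤ m)
    (A : Matrix (Fin m) (Fin n) ℝ)
    (xk zk : Fin n → ℝ) (hxk : ∀ i, 0 < xk i) (hzk : ∀ i, 0 < zk i)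
    (σk σk1 αk α γ₁ : ℝ)
    (Δx Δz Δx' Δz' : Fin n → ℝ) (Δlam Δlam' : Fin m → ℝ)
    (μk : ℝ) (hμk : μk = (∑ i, xk i * zk i) / n)
    (hAx : A.mulVec Δx = 0)
    (hAl : (Matrix.transpose A).mulVec Δlam + Δz = 0)
    (hNewton : ∀ i, zk i * Δx i + xk i * Δz i = σk * μk - xk i * zk i)
    (xk1 zk1 : Fin n → ℝ)
    (hxk1 : xk1 = fun i => xk i + αk * Δx i)
    (hzk1 : zk1 = fun i => zk i + αk * Δz i)
    (μk1 : ℝ) (hμk1 : μk1 = (∑ i, xk1 i * zk1 i) / n)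
    (hAx' : A.mulVec Δx' = 0)
    (hAl' : (Matrix.transpose A).mulVec Δlam' + Δz' = 0)
    (hQN : ∀ i, zk i * Δx' i + xk i * Δz' i
      = σk1 * μk1 - xk1 i * zk1 i
        + γ₁ * (αk * (zk i * Δx i + xk i * Δz i) - (xk1 i * zk1 i - xk i * zk i)))
    (xk2 zk2 : Fin n → ℝ)
    (hxk2 : xk2 = fun i => xk1 i + α * Δx' i)
    (hzk2 : zk2 = fun i => zk1 i + α * Δz' i)
    (μα : ℝ) (hμα : μα = (∑ i, xk2 i * zk2 i) / n) :
    μα = (1 - α * (1 - σk1)) * μk1 :=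
  qn_mu_decrease_general n m A xk zk σk1 αk α γ₁ Δx Δz Δx' Δz' Δlam Δlam' hAx hAl xk1 zk1 hxk1 hzk1
    μk1 hμk1 hAx' hAl' hQN xk2 zk2 hxk2 hzk2 μα hμα
end

section
/- Assume ‖x^{k+1}∘z^{k+1} − μ_{k+1}e‖ ≤ θ_{k+1}μ_{k+1} with θ_{k+1} ∈ (0,1), that μ_{k+1} = (1 − ᾱ_k(1 − σ_k))μ_k, and that ᾱ_k ∈ (0,1], σ_k ∈ [0,1) and σ_{k+1} ∈ [0,1]. Let y ∈ ℝ^{2n+m} be any vector whose last n components equal x^{k+1}∘z^{k+1} − x^k∘z^k, let v = (0, 0, σ_{k+1}μ_{k+1}e − x^{k+1}∘z^{k+1}) ∈ ℝ^{2n+m}, and set γ₁ = (yᵀv)/(yᵀy). Then y ≠ 0 and |γ₁| ≤ 2(1 − ᾱ_k(1 − σ_k))·√(θ_{k+1}² + (1 − σ_{k+1})²·n) / (ᾱ_k(1 − σ_k)). -/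
open scoped BigOperators

/-- Euclidean norm of a finitely-indexed real vector. -/
noncomputable def enorm {ι : Type*} [Fintype ι] (v : ι → ℝ) : ℝ :=
  Real.sqrt (∑ i, v i ^ 2)

/-!
The last block `w` of `y` sums to `n (μ_{k+1} - μ_k) = -n ᾱ_k (1 - σ_k) μ_k`, so Cauchy–Schwarz
against `e` gives `‖y‖ ≥ ‖w‖ ≥ ᾱ_k (1 - σ_k) μ_k > 0`. As `v` is supported on that block,
Cauchy–Schwarz again gives `|γ₁| ≤ ‖c‖ / ‖w‖` with `c = σ_{k+1} μ_{k+1} e - x^{k+1} ∘ z^{k+1}`.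
Writing `c = (σ_{k+1} - 1) μ_{k+1} e - (x^{k+1} ∘ z^{k+1} - μ_{k+1} e)`, each piece has norm at most
`√(θ_{k+1}² + (1 - σ_{k+1})² n) μ_{k+1}` (the second by the `N₂` condition), and finally
`μ_{k+1} = (1 - ᾱ_k (1 - σ_k)) μ_k`.
-/

section EuclideanVectors

variable {ι : Type*} [Fintype ι]

-- `_root_.enorm` is the Euclidean norm above; plain `enorm` would also match Mathlib's `ENorm.enorm`.
theorem enorm_eq_norm_toLp (v : ι → ℝ) :
    _root_.enorm v = ‖(WithLp.toLp 2 v : EuclideanSpace ℝ ι)‖ := by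
  simp [_root_.enorm, EuclideanSpace.norm_eq]

theorem dotp_eq_inner_toLp (u v : ι → ℝ) :
    dotp u v = inner ℝ (WithLp.toLp 2 u : EuclideanSpace ℝ ι) (WithLp.toLp 2 v) := by
  simp [dotp, PiLp.inner_apply, mul_comm]

theorem dotp_self_eq_enorm_sq (v : ι → ℝ) : dotp v v = _root_.enorm v ^ 2 := by
  rw [dotp_eq_inner_toLp, enorm_eq_norm_toLp, real_inner_self_eq_norm_sq]

theorem abs_dotp_le_enorm_mul_enorm (u v : ι → ℝ) :
    |dotp u v| ≤ _root_.enorm u * _root_.enorm v := by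
  rw [dotp_eq_inner_toLp, enorm_eq_norm_toLp, enorm_eq_norm_toLp]
  exact abs_real_inner_le_norm _ _

theorem enorm_sub_le_enorm_add_enorm (u v : ι → ℝ) :
    _root_.enorm (u - v) ≤ _root_.enorm u + _root_.enorm v := by
  simp only [enorm_eq_norm_toLp, WithLp.toLp_sub]
  exact norm_sub_le _ _

theorem enorm_const (c : ℝ) :
    _root_.enorm (fun _ : ι => c) = |c| * Real.sqrt (Fintype.card ι) := by
  simp [_root_.enorm, Real.sqrt_sq_eq_abs, mul_comm]

theorem enorm_comp_le {κ : Type*} [Fintype κ] (v : ι → ℝ) {f : κ → ι}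
    (hf : Function.Injective f) : _root_.enorm (v ∘ f) ≤ _root_.enorm v :=
  Real.sqrt_le_sqrt <| (Finset.sum_map Finset.univ ⟨f, hf⟩ fun i => v i ^ 2).symm.trans_le
    (Finset.sum_le_univ_sum_of_nonneg fun i => sq_nonneg (v i))

theorem abs_sum_le_sqrt_card_mul_enorm (v : ι → ℝ) :
    |∑ i, v i| ≤ Real.sqrt (Fintype.card ι) * _root_.enorm v := by
  simpa [dotp, enorm_const] using abs_dotp_le_enorm_mul_enorm (fun _ => 1) v

theorem le_enorm_of_card_mul_le_abs_sum [Nonempty ι] {v : ι → ℝ} {c : ℝ} (hc : 0 ≤ c)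
    (h : Fintype.card ι * c ≤ |∑ i, v i|) : c ≤ _root_.enorm v := by
  have hcard : (1 : ℝ) ≤ Fintype.card ι := by exact_mod_cast Fintype.card_pos
  have hsqrt : 0 < Real.sqrt (Fintype.card ι) := Real.sqrt_pos.2 (by linarith)
  have hsqrt_mul : Real.sqrt (Fintype.card ι) * c ≤ _root_.enorm v := by
    refine le_of_mul_le_mul_left ?_ hsqrt
    rw [← mul_assoc, Real.mul_self_sqrt (by linarith)]
    exact h.trans (abs_sum_le_sqrt_card_mul_enorm v)
  exact (le_mul_of_one_le_left hc (Real.one_le_sqrt.2 hcard)).trans hsqrt_mul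

theorem enorm_const_mul_sub_le {x : ι → ℝ} {μ θ : ℝ} (σ : ℝ) (hμ : 0 ≤ μ)
    (hx : _root_.enorm (fun i => x i - μ) ≤ θ * μ) :
    _root_.enorm (fun i => σ * μ - x i) ≤
      2 * Real.sqrt (θ ^ 2 + (1 - σ) ^ 2 * Fintype.card ι) * μ := by
  set T := θ ^ 2 + (1 - σ) ^ 2 * Fintype.card ι
  have hsplit : (fun i => σ * μ - x i) = (fun _ => (σ - 1) * μ) - fun i => x i - μ := by
    funext i; simp only [Pi.sub_apply]; ring
  have hσ : |σ - 1| * Real.sqrt (Fintype.card ι) ≤ Real.sqrt T := by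
    rw [abs_sub_comm, ← Real.sqrt_sq_eq_abs, ← Real.sqrt_mul (sq_nonneg _)]
    exact Real.sqrt_le_sqrt (le_add_of_nonneg_left (sq_nonneg θ))
  have hθ : θ ≤ Real.sqrt T :=
    (le_abs_self θ).trans (Real.abs_le_sqrt (le_add_of_nonneg_right (by positivity)))
  calc _ ≤ |σ - 1| * Real.sqrt (Fintype.card ι) * μ + θ * μ := by
        rw [hsplit]
        refine (enorm_sub_le_enorm_add_enorm _ _).trans ?_
        rw [enorm_const, abs_mul, abs_of_nonneg hμ]
        linarith
    _ ≤ 2 * Real.sqrt T * μ := by nlinarith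

theorem div_card_sum_mul_pos [Nonempty ι] {x z : ι → ℝ} (hx : ∀ i, 0 < x i)
    (hz : ∀ i, 0 < z i) : 0 < (∑ i, x i * z i) / Fintype.card ι :=
  div_pos (Finset.sum_pos (fun i _ => mul_pos (hx i) (hz i)) Finset.univ_nonempty)
    (by exact_mod_cast Fintype.card_pos)

end EuclideanVectors

theorem dotp_blk_zero_zero {n m : ℕ} (y : Fin n ⊕ Fin m ⊕ Fin n → ℝ) (w : Fin n → ℝ) :
    dotp y (blk (fun _ => 0) (fun _ => 0) w) = dotp (y ∘ Sum.inr ∘ Sum.inr) w := by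
  simp [dotp, blk, Fintype.sum_sum_type]

theorem abs_div_le_div_of_abs_le_mul {p q a b : ℝ} (hp : |p| ≤ a * b) (ha : 0 < a)
    (hq : a ^ 2 ≤ q) : |p / q| ≤ b / a := by
  have hq0 : 0 < q := (pow_pos ha 2).trans_le hq
  rw [abs_div, abs_of_pos hq0, div_le_div_iff₀ hq0 ha]
  nlinarith [abs_nonneg p]

theorem gamma1_bound_N2_general
    (n m : ℕ) (hn : 1 ≤ n)
    (xk zk xk1 zk1 : Fin n → ℝ)
    (hxk : ∀ i, 0 < xk i) (hzk : ∀ i, 0 < zk i)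
    (hxk1 : ∀ i, 0 < xk1 i) (hzk1 : ∀ i, 0 < zk1 i)
    (μk μk1 : ℝ)
    (hμk : μk = (∑ i, xk i * zk i) / n)
    (hμk1 : μk1 = (∑ i, xk1 i * zk1 i) / n)
    (θk1 : ℝ)
    (hN2 : _root_.enorm (fun i => xk1 i * zk1 i - μk1) ≤ θk1 * μk1)
    (σk σk1 αk : ℝ)
    (hαk : αk ∈ Set.Ioc (0:ℝ) 1)
    (hσk : σk ∈ Set.Ico (0:ℝ) 1)
    (hμrel : μk1 = (1 - αk * (1 - σk)) * μk)
    (y : Fin n ⊕ Fin m ⊕ Fin n → ℝ)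
    (hy : ∀ i, y (Sum.inr (Sum.inr i)) = xk1 i * zk1 i - xk i * zk i)
    (v : Fin n ⊕ Fin m ⊕ Fin n → ℝ)
    (hv : v = blk (fun _ => 0) (fun _ => 0) (fun i => σk1 * μk1 - xk1 i * zk1 i))
    (γ₁ : ℝ) (hγ₁ : γ₁ = dotp y v / dotp y y) :
    y ≠ 0 ∧
    |γ₁| ≤ 2 * (1 - αk * (1 - σk)) *
      Real.sqrt (θk1 ^ 2 + (1 - σk1) ^ 2 * n) / (αk * (1 - σk)) := by
  set a := αk * (1 - σk)
  set w := y ∘ Sum.inr ∘ Sum.inr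
  have : Nonempty (Fin n) := ⟨⟨0, hn⟩⟩
  have hn0 : (0 : ℝ) < n := by exact_mod_cast hn
  have ha : 0 < a := mul_pos hαk.1 (sub_pos.2 hσk.2)
  have hμk0 : 0 < μk := by simpa [← hμk] using div_card_sum_mul_pos hxk hzk
  have hμk1_pos : 0 < μk1 := by simpa [← hμk1] using div_card_sum_mul_pos hxk1 hzk1
  have hsum : ∑ i, w i = -(n * (a * μk)) := by
    have hk : ∑ i, xk i * zk i = n * μk := by rw [hμk]; field_simp
    have hk1 : ∑ i, xk1 i * zk1 i = n * μk1 := by rw [hμk1]; field_simp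
    simp only [w, Function.comp_apply, hy, Finset.sum_sub_distrib, hk, hk1, hμrel]
    ring
  have hw : a * μk ≤ _root_.enorm w := le_enorm_of_card_mul_le_abs_sum (mul_pos ha hμk0).le
    (by simp [hsum, abs_of_pos (mul_pos hn0 (mul_pos ha hμk0))])
  have hw0 : 0 < _root_.enorm w := (mul_pos ha hμk0).trans_le hw
  refine ⟨fun hy0 => hw0.ne' (by simp [w, hy0, _root_.enorm]), ?_⟩
  have hyy : _root_.enorm w ^ 2 ≤ dotp y y := by
    rw [dotp_self_eq_enorm_sq]
    gcongr
    exact enorm_comp_le y (Sum.inr_injective.comp Sum.inr_injective)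
  have hc := enorm_const_mul_sub_le σk1 hμk1_pos.le hN2
  rw [Fintype.card_fin] at hc
  calc |γ₁| ≤ _root_.enorm (fun i => σk1 * μk1 - xk1 i * zk1 i) / _root_.enorm w := by
        rw [hγ₁, hv, dotp_blk_zero_zero]
        exact abs_div_le_div_of_abs_le_mul (abs_dotp_le_enorm_mul_enorm w _) hw0 hyy
    _ ≤ 2 * Real.sqrt (θk1 ^ 2 + (1 - σk1) ^ 2 * n) * μk1 / (a * μk) :=
        div_le_div₀ (by positivity) hc (by positivity) hw
    _ = _ := by rw [hμrel]; field_simp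

/-- Bound on the quasi-Newton projection scalar `γ₁` in the `N₂` neighborhood. -/
theorem gamma1_bound_N2
    (n m : ℕ) (hn : 1 ≤ n) (hm : 1 ≤ m)
    (xk zk xk1 zk1 : Fin n → ℝ)
    (hxk : ∀ i, 0 < xk i) (hzk : ∀ i, 0 < zk i)
    (hxk1 : ∀ i, 0 < xk1 i) (hzk1 : ∀ i, 0 < zk1 i)
    (μk μk1 : ℝ)
    (hμk : μk = (∑ i, xk i * zk i) / n)
    (hμk1 : μk1 = (∑ i, xk1 i * zk1 i) / n)
    (θk1 : ℝ) (hθk1 : θk1 ∈ Set.Ioo (0:ℝ) 1)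
    (hN2 : _root_.enorm (fun i => xk1 i * zk1 i - μk1) ≤ θk1 * μk1)
    (σk σk1 αk : ℝ)
    (hαk : αk ∈ Set.Ioc (0:ℝ) 1)
    (hσk : σk ∈ Set.Ico (0:ℝ) 1)
    (hσk1 : σk1 ∈ Set.Icc (0:ℝ) 1)
    (hμrel : μk1 = (1 - αk * (1 - σk)) * μk)
    (y : Fin n ⊕ Fin m ⊕ Fin n → ℝ)
    (hy : ∀ i, y (Sum.inr (Sum.inr i)) = xk1 i * zk1 i - xk i * zk i)
    (v : Fin n ⊕ Fin m ⊕ Fin n → ℝ)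
    (hv : v = blk (fun _ => 0) (fun _ => 0) (fun i => σk1 * μk1 - xk1 i * zk1 i))
    (γ₁ : ℝ) (hγ₁ : γ₁ = dotp y v / dotp y y) :
    y ≠ 0 ∧
    |γ₁| ≤ 2 * (1 - αk * (1 - σk)) *
      Real.sqrt (θk1 ^ 2 + (1 - σk1) ^ 2 * n) / (αk * (1 - σk)) :=
  gamma1_bound_N2_general n m hn xk zk xk1 zk1 hxk hzk hxk1 hzk1 μk μk1 hμk hμk1 θk1 hN2 σk σk1 αk
    hαk hσk hμrel y hy v hv γ₁ hγ₁
end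

section
/- Under the feasible two-step setup, the combined directions satisfy the identity z^k∘(ᾱ_kΔx^k + ᾱΔx′) + x^k∘(ᾱ_kΔz^k + ᾱΔz′) = (ᾱ + ᾱ_k(1 − ᾱ))(μ_k e − x^k∘z^k) + (μ(ᾱ) − μ_k)e − (1 + γ₁)·ᾱ·ᾱ_k²·(Δx^k∘Δz^k). -/
/-!
The combined direction `(d_x, d_z) = ᾱ_k (Δx^k, Δz^k) + ᾱ (Δx', Δz')` is again a feasible direction, so
`d_x ⬝ d_z = 0` and the complementarity gap is affine along it:
`n μ(ᾱ) = n μ_k + ∑ (z^k ∘ d_x + x^k ∘ d_z)`.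
Adding `ᾱ_k` times the Newton equation to `ᾱ` times the quasi-Newton one (where the Broyden correction
reduces to `-γ₁ ᾱ_k² Δx^k ∘ Δz^k`) writes `z^k ∘ d_x + x^k ∘ d_z` as a constant vector plus
`(ᾱ + ᾱ_k(1 - ᾱ))(μ_k e - x^k ∘ z^k) - (1 + γ₁) ᾱ ᾱ_k² Δx^k ∘ Δz^k`, which has mean zero;
averaging therefore identifies the constant as `μ(ᾱ) - μ_k`.
-/

open Finset Matrix

namespace Matrix

variable {m n R : Type*} [Fintype m] [Fintype n] [CommRing R]

def IsFeasibleDirection (A : Matrix m n R) (u : n → R) (w : m → R) (v : n → R) : Prop :=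
  A *ᵥ u = 0 ∧ Aᵀ *ᵥ w + v = 0

theorem IsFeasibleDirection.dotProduct_eq_zero {A : Matrix m n R} {u v : n → R} {w : m → R}
    (h : A.IsFeasibleDirection u w v) : u ⬝ᵥ v = 0 := by
  rw [eq_neg_of_add_eq_zero_right h.2, dotProduct_neg, dotProduct_mulVec, vecMul_transpose, h.1,
    zero_dotProduct, neg_zero]

theorem IsFeasibleDirection.smul_add_smul {A : Matrix m n R} {u v u' v' : n → R} {w w' : m → R}
    (h : A.IsFeasibleDirection u w v) (h' : A.IsFeasibleDirection u' w' v') (a b : R) :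
    A.IsFeasibleDirection (a • u + b • u') (a • w + b • w') (a • v + b • v') := by
  constructor
  · rw [mulVec_add, mulVec_smul, mulVec_smul, h.1, h'.1, smul_zero, smul_zero, add_zero]
  · rw [mulVec_add, mulVec_smul, mulVec_smul]
    linear_combination (norm := module) a • h.2 + b • h'.2

end Matrix

theorem Finset.sum_add_mul_add_of_sum_mul_eq_zero {ι R : Type*} [Fintype ι] [CommRing R]
    (x z u v : ι → R) (huv : ∑ i, u i * v i = 0) :
    ∑ i, (x i + u i) * (z i + v i) = ∑ i, x i * z i + ∑ i, (z i * u i + x i * v i) := by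
  calc ∑ i, (x i + u i) * (z i + v i)
      = ∑ i, (x i * z i + (z i * u i + x i * v i) + u i * v i) := sum_congr rfl fun i _ => by ring
    _ = _ := by rw [sum_add_distrib, sum_add_distrib, huv, add_zero]

theorem eq_sum_div_card_of_forall_eq_add {ι K : Type*} [Fintype ι] [Nonempty ι] [Field K]
    [CharZero K] {f w : ι → K} {c : K} (hw : ∑ i, w i = 0) (hf : ∀ i, f i = w i + c) :
    c = (∑ i, f i) / Fintype.card ι := by
  rw [sum_congr rfl fun i _ => hf i, sum_add_distrib, hw, zero_add, sum_const, card_univ,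
    nsmul_eq_mul, mul_div_cancel_left₀ _ (Nat.cast_ne_zero.2 Fintype.card_ne_zero)]

theorem combined_direction_identity_general
    (n m : ℕ)
    (A : Matrix (Fin m) (Fin n) ℝ)
    (xk zk : Fin n → ℝ)
    (σk σk1 αk α γ₁ : ℝ)
    (Δx Δz Δx' Δz' : Fin n → ℝ) (Δlam Δlam' : Fin m → ℝ)
    (μk : ℝ) (hμk : μk = (∑ i, xk i * zk i) / n)
    (hAx : A.mulVec Δx = 0)
    (hAl : (Matrix.transpose A).mulVec Δlam + Δz = 0)
    (hNewton : ∀ i, zk i * Δx i + xk i * Δz i = σk * μk - xk i * zk i)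
    (xk1 zk1 : Fin n → ℝ)
    (hxk1 : xk1 = fun i => xk i + αk * Δx i)
    (hzk1 : zk1 = fun i => zk i + αk * Δz i)
    (μk1 : ℝ)
    (hAx' : A.mulVec Δx' = 0)
    (hAl' : (Matrix.transpose A).mulVec Δlam' + Δz' = 0)
    (hQN : ∀ i, zk i * Δx' i + xk i * Δz' i
      = σk1 * μk1 - xk1 i * zk1 i
        + γ₁ * (αk * (zk i * Δx i + xk i * Δz i) - (xk1 i * zk1 i - xk i * zk i)))
    (xk2 zk2 : Fin n → ℝ)
    (hxk2 : xk2 = fun i => xk1 i + α * Δx' i)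
    (hzk2 : zk2 = fun i => zk1 i + α * Δz' i)
    (μα : ℝ) (hμα : μα = (∑ i, xk2 i * zk2 i) / n) :
    ∀ i, zk i * (αk * Δx i + α * Δx' i) + xk i * (αk * Δz i + α * Δz' i)
      = (α + αk * (1 - α)) * (μk - xk i * zk i) + (μα - μk)
        - (1 + γ₁) * α * αk ^ 2 * (Δx i * Δz i) := by
  intro i
  subst hxk1 hzk1 hxk2 hzk2
  have : Nonempty (Fin n) := ⟨i⟩
  have hn : (n : ℝ) ≠ 0 := Nat.cast_ne_zero.2 i.pos.ne'
  have hfeas : A.IsFeasibleDirection Δx Δlam Δz := ⟨hAx, hAl⟩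
  have hΔ : ∑ j, Δx j * Δz j = 0 := hfeas.dotProduct_eq_zero
  have horth : ∑ j, (αk * Δx j + α * Δx' j) * (αk * Δz j + α * Δz' j) = 0 :=
    (hfeas.smul_add_smul ⟨hAx', hAl'⟩ αk α).dotProduct_eq_zero
  have hgap : μα - μk = (∑ j, (zk j * (αk * Δx j + α * Δx' j)
      + xk j * (αk * Δz j + α * Δz' j))) / n := by
    simp only [hμα, hμk, add_assoc]
    rw [sum_add_mul_add_of_sum_mul_eq_zero _ _ _ _ horth]
    ring
  have hmean_zero : ∑ j, ((α + αk * (1 - α)) * (μk - xk j * zk j)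
      - (1 + γ₁) * α * αk ^ 2 * (Δx j * Δz j)) = 0 := by
    rw [sum_sub_distrib, ← mul_sum, ← mul_sum, sum_sub_distrib, sum_const, card_univ,
      Fintype.card_fin, nsmul_eq_mul, hμk, mul_div_cancel₀ _ hn, hΔ]
    ring
  have hpointwise : ∀ j, zk j * (αk * Δx j + α * Δx' j) + xk j * (αk * Δz j + α * Δz' j)
      = ((α + αk * (1 - α)) * (μk - xk j * zk j) - (1 + γ₁) * α * αk ^ 2 * (Δx j * Δz j))
        + (αk * (1 - α) * σk * μk + α * σk1 * μk1 - (α + αk * (1 - α)) * μk) := fun j => by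
    linear_combination αk * (1 - α) * hNewton j + α * hQN j
  have hconst := eq_sum_div_card_of_forall_eq_add hmean_zero hpointwise
  rw [Fintype.card_fin, ← hgap] at hconst
  linear_combination hpointwise i + hconst

/-- Combined-direction identity (feasible two-step setup):
`Z^k(αkΔx^k + αΔx') + X^k(αkΔz^k + αΔz')
  = (α + αk(1-α))(μk e - X^kZ^k e) + (μ(α) - μk) e - (1+γ₁) α αk² ΔX^kΔZ^k e`. -/
theorem combined_direction_identity
    (n m : ℕ) (hn : 1 ≤ n) (hm : 1 ≤ m)
    (A : Matrix (Fin m) (Fin n) ℝ)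
    (xk zk : Fin n → ℝ) (hxk : ∀ i, 0 < xk i) (hzk : ∀ i, 0 < zk i)
    (σk σk1 αk α γ₁ : ℝ)
    (Δx Δz Δx' Δz' : Fin n → ℝ) (Δlam Δlam' : Fin m → ℝ)
    (μk : ℝ) (hμk : μk = (∑ i, xk i * zk i) / n)
    (hAx : A.mulVec Δx = 0)
    (hAl : (Matrix.transpose A).mulVec Δlam + Δz = 0)
    (hNewton : ∀ i, zk i * Δx i + xk i * Δz i = σk * μk - xk i * zk i)
    (xk1 zk1 : Fin n → ℝ)
    (hxk1 : xk1 = fun i => xk i + αk * Δx i)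
    (hzk1 : zk1 = fun i => zk i + αk * Δz i)
    (μk1 : ℝ) (hμk1 : μk1 = (∑ i, xk1 i * zk1 i) / n)
    (hAx' : A.mulVec Δx' = 0)
    (hAl' : (Matrix.transpose A).mulVec Δlam' + Δz' = 0)
    (hQN : ∀ i, zk i * Δx' i + xk i * Δz' i
      = σk1 * μk1 - xk1 i * zk1 i
        + γ₁ * (αk * (zk i * Δx i + xk i * Δz i) - (xk1 i * zk1 i - xk i * zk i)))
    (xk2 zk2 : Fin n → ℝ)
    (hxk2 : xk2 = fun i => xk1 i + α * Δx' i)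
    (hzk2 : zk2 = fun i => zk1 i + α * Δz' i)
    (μα : ℝ) (hμα : μα = (∑ i, xk2 i * zk2 i) / n) :
    ∀ i, zk i * (αk * Δx i + α * Δx' i) + xk i * (αk * Δz i + α * Δz' i)
      = (α + αk * (1 - α)) * (μk - xk i * zk i) + (μα - μk)
        - (1 + γ₁) * α * αk ^ 2 * (Δx i * Δz i) :=
  combined_direction_identity_general n m A xk zk σk σk1 αk α γ₁ Δx Δz Δx' Δz' Δlam Δlam' μk hμk hAx
    hAl hNewton xk1 zk1 hxk1 hzk1 μk1 hAx' hAl' hQN xk2 zk2 hxk2 hzk2 μα hμα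
end

section
/- Feasible quasi-Newton step stays in the N₂ neighborhood: assume additionally that Ax^k = b and Aᵀλ^k + z^k = c for b ∈ ℝ^m, c ∈ ℝ^n and λ^k ∈ ℝ^m, that x^{k+1}, z^{k+1} have positive components, that θ_k = θ_{k+1} = θ ∈ (0, 16/25) and σ_k = σ_{k+1} = σ ∈ (0,1) satisfy (θ² + n(1 − σ)²)/(2^{3/2}(1 − θ)) ≤ θσ, that ‖x^k∘z^k − μ_k e‖ ≤ θμ_k and ‖x^{k+1}∘z^{k+1} − μ_{k+1}e‖ ≤ θμ_{k+1}, that ‖Δx^k∘Δz^k‖ ≤ (θ² + n(1 − σ)²)/(2^{3/2}(1 − θ))·μ_k, and that the quasi-Newton scalar is γ₁ = (x^{k+1}∘z^{k+1} − x^k∘z^k)ᵀ(σμ_{k+1}e − x^{k+1}∘z^{k+1}) / ‖x^{k+1}∘z^{k+1} − x^k∘z^k‖². If the step sizes satisfy ᾱ_k ∈ (0, min{(1 − σ)/(4σ), σ(1 − σ)/(10(1 − σ) + 4)}] and ᾱ ∈ [ᾱ_k, σ(1 − σ)/(10(1 − σ) + 4)], then the next iterate x^{k+2} = x^{k+1}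 + ᾱΔx′, λ^{k+2} = λ^k + ᾱ_kΔλ^k + ᾱΔλ′, z^{k+2} = z^{k+1} + ᾱΔz′ satisfies Ax^{k+2} = b, Aᵀλ^{k+2} + z^{k+2} = c, x^{k+2} and z^{k+2} have positive components, and ‖x^{k+2}∘z^{k+2} − μ(ᾱ)e‖ ≤ θ·μ(ᾱ). -/
/-!
The Broyden update turns the quasi-Newton right-hand side into the exact Newton right-hand side at
`(x^{k+1}, z^{k+1})` up to the correction `-γ₁ ᾱₖ² Δx ∘ Δz`. The Newton step moves `x ∘ z` by at
least `ᾱₖ (√n (1 - σ) - ᾱₖ θ σ) μₖ`, so Cauchy–Schwarz makes `|γ₁|` of order `1 / ᾱₖ` and the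
correction at most `θ σ μₖ₊₁ / 4`. Thus `(Δx', Δz')` is an inexact Newton direction at
`(x^{k+1}, z^{k+1})`. After the primal-dual scaling, where `Δxᵀ Δz = 0` and `Δx'ᵀ Δz' = 0` become
Pythagoras, its Newton residual `r` and the second-order term `ᾱ ‖Δx' ∘ Δz'‖` add up to at most
`θ σ μₖ₊₁`. With `μ(t) = (1 - t (1 - σ)) μₖ₊₁`, the identity
`x(t) ∘ z(t) - μ(t) e = (1 - t) (x^{k+1} ∘ z^{k+1} - μₖ₊₁ e) + t r + t² Δx' ∘ Δz'`
puts the whole segment `t ∈ [0, ᾱ]` in `N₂(θ)`. No product `xᵢ(t) zᵢ(t)` vanishes there, so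
`x(ᾱ), z(ᾱ) > 0` by continuity.
-/

open scoped BigOperators

open Matrix

namespace QuasiNewtonN2

local notation "‖" v "‖₂" => @_root_.enorm _ _ v

section EuclideanNorm

variable {ι : Type*} [Fintype ι]

theorem enorm_eq_norm (v : ι → ℝ) : ‖v‖₂ = ‖WithLp.toLp 2 v‖ := by
  simp [_root_.enorm, EuclideanSpace.norm_eq]

theorem enorm_nonneg (v : ι → ℝ) : 0 ≤ ‖v‖₂ := Real.sqrt_nonneg _

theorem enorm_sq (v : ι → ℝ) : ‖v‖₂ ^ 2 = ∑ i, v i ^ 2 := Real.sq_sqrt (by positivity)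

theorem enorm_add_le (u v : ι → ℝ) : ‖fun i => u i + v i‖₂ ≤ ‖u‖₂ + ‖v‖₂ := by
  simp only [enorm_eq_norm]
  exact norm_add_le _ _

theorem enorm_sub_le (u v : ι → ℝ) : ‖fun i => u i - v i‖₂ ≤ ‖u‖₂ + ‖v‖₂ := by
  simp only [enorm_eq_norm]
  exact norm_sub_le _ _

theorem enorm_const_mul (c : ℝ) (v : ι → ℝ) : ‖fun i => c * v i‖₂ = |c| * ‖v‖₂ := by
  simp only [enorm_eq_norm, ← Real.norm_eq_abs]
  exact norm_smul c (WithLp.toLp 2 v)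

theorem abs_apply_le_enorm (v : ι → ℝ) (i : ι) : |v i| ≤ ‖v‖₂ := by
  simpa only [enorm_eq_norm, Real.norm_eq_abs] using PiLp.norm_apply_le (WithLp.toLp 2 v) i

theorem abs_sum_mul_le (u v : ι → ℝ) : |∑ i, u i * v i| ≤ ‖u‖₂ * ‖v‖₂ := by
  simpa [enorm_eq_norm, PiLp.inner_apply, mul_comm] using
    abs_real_inner_le_norm (WithLp.toLp 2 u) (WithLp.toLp 2 v)

theorem enorm_mul_le (u v : ι → ℝ) : ‖fun i => u i * v i‖₂ ≤ ‖u‖₂ * ‖v‖₂ := by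
  refine le_of_sq_le_sq ?_ (mul_nonneg (enorm_nonneg u) (enorm_nonneg v))
  rw [mul_pow, enorm_sq, enorm_sq v, Finset.mul_sum]
  gcongr with i
  rw [mul_pow, ← sq_abs (u i)]
  gcongr
  exact abs_apply_le_enorm u i

theorem abs_sum_mul_div_sum_sq_mul_enorm_le (u v : ι → ℝ) :
    |(∑ i, u i * v i) / ∑ i, u i ^ 2| * ‖u‖₂ ≤ ‖v‖₂ := by
  rcases (enorm_nonneg u).eq_or_lt with hu | hu
  · rw [← hu, mul_zero]
    exact enorm_nonneg v
  rw [← enorm_sq, abs_div, abs_of_nonneg (sq_nonneg ‖u‖₂), div_mul_eq_mul_div,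
    div_le_iff₀ (by positivity)]
  calc |∑ i, u i * v i| * ‖u‖₂ ≤ ‖u‖₂ * ‖v‖₂ * ‖u‖₂ := by gcongr; exact abs_sum_mul_le u v
    _ = ‖v‖₂ * ‖u‖₂ ^ 2 := by ring

end EuclideanNorm

section Feasibility

variable {ι κ : Type*} {A : Matrix κ ι ℝ}

theorem mulVec_add_mul_eq [Fintype ι] {x dx : ι → ℝ} {b : κ → ℝ} (hx : A *ᵥ x = b)
    (hdx : A *ᵥ dx = 0) (t : ℝ) : A *ᵥ (fun i => x i + t * dx i) = b := by
  change A *ᵥ (x + t • dx) = b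
  rw [mulVec_add, mulVec_smul, hx, hdx, smul_zero, add_zero]

theorem transpose_mulVec_add_mul_add_eq [Fintype κ] {l dl : κ → ℝ} {z dz c : ι → ℝ}
    (hz : Aᵀ *ᵥ l + z = c) (hdz : Aᵀ *ᵥ dl + dz = 0) (t : ℝ) :
    Aᵀ *ᵥ (fun j => l j + t * dl j) + (fun i => z i + t * dz i) = c := by
  change Aᵀ *ᵥ (l + t • dl) + (z + t • dz) = c
  rw [mulVec_add, mulVec_smul,
    show Aᵀ *ᵥ l + t • Aᵀ *ᵥ dl + (z + t • dz) = (Aᵀ *ᵥ l + z) + t • (Aᵀ *ᵥ dl + dz) by module,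
    hz, hdz, smul_zero, add_zero]

theorem sum_mul_eq_zero_of_mulVec [Fintype ι] [Fintype κ] {dx dz : ι → ℝ} {dl : κ → ℝ}
    (hdx : A *ᵥ dx = 0) (hdz : Aᵀ *ᵥ dl + dz = 0) : ∑ i, dx i * dz i = 0 := by
  change dx ⬝ᵥ dz = 0
  rw [eq_neg_of_add_eq_zero_right hdz, dotProduct_neg, dotProduct_mulVec, vecMul_transpose, hdx,
    zero_dotProduct, neg_zero]

end Feasibility

section NewtonStep

variable {ι : Type*}

def newtonResidual (σ μ : ℝ) (p q dp dq : ι → ℝ) : ι → ℝ :=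
  fun i => q i * dp i + p i * dq i - (σ * μ - p i * q i)

theorem mul_sub_along_eq (σ μ t : ℝ) (p q dp dq : ι → ℝ) (i : ι) :
    (p i + t * dp i) * (q i + t * dq i) - (1 - t * (1 - σ)) * μ
      = (1 - t) * (p i * q i - μ) + t * newtonResidual σ μ p q dp dq i
        + t ^ 2 * (dp i * dq i) := by
  simp only [newtonResidual]
  ring

variable [Fintype ι]

theorem one_sub_mul_le_of_enorm_sub_le {w : ι → ℝ} {θ μ : ℝ} (h : ‖fun i => w i - μ‖₂ ≤ θ * μ)
    (i : ι) : (1 - θ) * μ ≤ w i := by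
  have := (abs_le.mp ((abs_apply_le_enorm (fun i => w i - μ) i).trans h)).1
  linarith

theorem enorm_sq_const_mul_sub (σ : ℝ) {w : ι → ℝ} {μ : ℝ}
    (hw : ∑ i, w i = Fintype.card ι * μ) :
    ‖fun i => σ * μ - w i‖₂ ^ 2
      = Fintype.card ι * ((1 - σ) * μ) ^ 2 + ‖fun i => w i - μ‖₂ ^ 2 := by
  have h (i : ι) : (σ * μ - w i) ^ 2
      = (w i - μ) ^ 2 + (2 * (1 - σ) * μ * w i - (1 - σ ^ 2) * μ ^ 2) := by
    ring
  rw [enorm_sq, enorm_sq, Finset.sum_congr rfl fun i _ => h i, Finset.sum_add_distrib,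
    Finset.sum_sub_distrib, ← Finset.mul_sum, hw, Finset.sum_const, Finset.card_univ, nsmul_eq_mul]
  ring

theorem enorm_const_mul_sub_le (σ : ℝ) {w : ι → ℝ} {μ θ : ℝ}
    (hw : ∑ i, w i = Fintype.card ι * μ) (hμ : 0 ≤ μ) (hN : ‖fun i => w i - μ‖₂ ≤ θ * μ) :
    ‖fun i => σ * μ - w i‖₂ ≤ √(θ ^ 2 + Fintype.card ι * (1 - σ) ^ 2) * μ := by
  refine le_of_sq_le_sq ?_ (by positivity)
  rw [enorm_sq_const_mul_sub σ hw, mul_pow (√_), Real.sq_sqrt (by positivity)]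
  nlinarith [pow_le_pow_left₀ (enorm_nonneg _) hN 2]

theorem le_enorm_const_mul_sub (σ : ℝ) {w : ι → ℝ} {μ : ℝ}
    (hw : ∑ i, w i = Fintype.card ι * μ) :
    √(Fintype.card ι) * (1 - σ) * μ ≤ ‖fun i => σ * μ - w i‖₂ := by
  refine le_of_sq_le_sq ?_ (enorm_nonneg _)
  rw [enorm_sq_const_mul_sub σ hw, mul_pow, mul_pow, Real.sq_sqrt (Nat.cast_nonneg _)]
  nlinarith [sq_nonneg ‖fun i => w i - μ‖₂]

theorem mean_along_eq [Nonempty ι] {σ μ μ' t : ℝ} {p q dp dq : ι → ℝ}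
    (hpq : ∑ i, p i * q i = Fintype.card ι * μ) (hres : ∑ i, newtonResidual σ μ p q dp dq i = 0)
    (horth : ∑ i, dp i * dq i = 0)
    (hμ' : ∑ i, (p i + t * dp i) * (q i + t * dq i) = Fintype.card ι * μ') :
    μ' = (1 - t * (1 - σ)) * μ := by
  have h := Finset.sum_congr rfl fun i (_ : i ∈ Finset.univ) => mul_sub_along_eq σ μ t p q dp dq i
  simp only [Finset.sum_sub_distrib, Finset.sum_add_distrib, ← Finset.mul_sum, Finset.sum_const,
    Finset.card_univ, nsmul_eq_mul, hpq, hres, horth, hμ'] at h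
  exact mul_left_cancel₀ (Nat.cast_ne_zero.2 Fintype.card_ne_zero) (by linarith)

theorem enorm_mul_sub_along_le {σ μ θ α t : ℝ} {p q dp dq : ι → ℝ} (ht : 0 ≤ t) (htα : t ≤ α)
    (hα : α ≤ 1) (hN : ‖fun i => p i * q i - μ‖₂ ≤ θ * μ)
    (hres : ‖newtonResidual σ μ p q dp dq‖₂ + α * ‖fun i => dp i * dq i‖₂ ≤ θ * σ * μ) :
    ‖fun i => (p i + t * dp i) * (q i + t * dq i) - (1 - t * (1 - σ)) * μ‖₂
      ≤ θ * ((1 - t * (1 - σ)) * μ) := by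
  have ht1 : 0 ≤ 1 - t := by linarith
  have hquad : t ^ 2 * ‖fun i => dp i * dq i‖₂ ≤ t * (α * ‖fun i => dp i * dq i‖₂) := by
    rw [sq, mul_assoc]
    gcongr
    exact enorm_nonneg _
  calc _ = ‖fun i => ((1 - t) * (p i * q i - μ) + t * newtonResidual σ μ p q dp dq i)
          + t ^ 2 * (dp i * dq i)‖₂ := by simp only [mul_sub_along_eq]
    _ ≤ (1 - t) * ‖fun i => p i * q i - μ‖₂ + t * ‖newtonResidual σ μ p q dp dq‖₂
          + t ^ 2 * ‖fun i => dp i * dq i‖₂ := by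
        refine (enorm_add_le _ _).trans ?_
        rw [enorm_const_mul, abs_of_nonneg (sq_nonneg t)]
        gcongr
        refine (enorm_add_le _ _).trans_eq ?_
        rw [enorm_const_mul, enorm_const_mul, abs_of_nonneg ht1, abs_of_nonneg ht]
    _ ≤ (1 - t) * (θ * μ) + t * (θ * σ * μ) := by
        have := mul_le_mul_of_nonneg_left hres ht
        have := mul_le_mul_of_nonneg_left hN ht1
        nlinarith
    _ = θ * ((1 - t * (1 - σ)) * μ) := by ring

theorem add_mul_pos_of_forall_mul_pos {a b d e α : ℝ} (ha : 0 < a) (hα : 0 ≤ α)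
    (h : ∀ t ∈ Set.Icc 0 α, 0 < (a + t * d) * (b + t * e)) : 0 < a + α * d := by
  by_contra! hneg
  obtain ⟨t, ht, hzero⟩ := intermediate_value_Icc' hα
    (by fun_prop : ContinuousOn (fun t => a + t * d) _) ⟨hneg, by simpa using ha.le⟩
  simpa [hzero] using h t ht

theorem step_mem_N2 {σ μ θ α : ℝ} {p q dp dq : ι → ℝ} (hp : ∀ i, 0 < p i) (hq : ∀ i, 0 < q i)
    (hμ : 0 < μ) (hθ : θ < 1) (hσ : 0 < σ) (hα0 : 0 ≤ α) (hα1 : α ≤ 1)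
    (hN : ‖fun i => p i * q i - μ‖₂ ≤ θ * μ)
    (hres : ‖newtonResidual σ μ p q dp dq‖₂ + α * ‖fun i => dp i * dq i‖₂ ≤ θ * σ * μ) :
    (∀ i, 0 < p i + α * dp i) ∧ (∀ i, 0 < q i + α * dq i) ∧
      ‖fun i => (p i + α * dp i) * (q i + α * dq i) - (1 - α * (1 - σ)) * μ‖₂
        ≤ θ * ((1 - α * (1 - σ)) * μ) := by
  have hprod : ∀ i, ∀ t ∈ Set.Icc 0 α, 0 < (p i + t * dp i) * (q i + t * dq i) := by
    rintro i t ⟨ht0, htα⟩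
    have hμt : 0 < (1 - t * (1 - σ)) * μ := by
      have : 0 < 1 - t * (1 - σ) := by
        rcases le_total σ 1 with hσ1 | hσ1
        · nlinarith [mul_nonneg (sub_nonneg.2 (htα.trans hα1)) (sub_nonneg.2 hσ1)]
        · nlinarith [mul_nonneg ht0 (sub_nonneg.2 hσ1)]
      positivity
    have := one_sub_mul_le_of_enorm_sub_le (enorm_mul_sub_along_le ht0 htα hα1 hN hres) i
    nlinarith
  refine ⟨fun i => add_mul_pos_of_forall_mul_pos (hp i) hα0 (hprod i),
    fun i => add_mul_pos_of_forall_mul_pos (b := p i) (e := dp i) (hq i) hα0 fun t ht => ?_,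
    enorm_mul_sub_along_le hα0 le_rfl hα1 hN hres⟩
  rw [mul_comm]
  exact hprod i t ht

end NewtonStep

section Scaling

variable {ι : Type*} [Fintype ι] {x z dx dz dx' dz' : ι → ℝ} {L : ℝ}

/-- The two vectors are `dx / d` and `d ∘ dz` for the primal-dual scaling `d = √(x / z)`. -/
theorem mul_sum_sq_scaled_le (hL : 0 < L) (hxz : ∀ i, L ≤ x i * z i)
    (horth : ∑ i, dx i * dz i = 0) :
    L * (‖fun i => z i * dx i / √(x i * z i)‖₂ ^ 2 + ‖fun i => x i * dz i / √(x i * z i)‖₂ ^ 2)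
      ≤ ‖fun i => z i * dx i + x i * dz i‖₂ ^ 2 := by
  have hpos (i : ι) : 0 < x i * z i := hL.trans_le (hxz i)
  set a := fun i => z i * dx i / √(x i * z i)
  set b := fun i => x i * dz i / √(x i * z i)
  have hab (i : ι) : a i * b i = dx i * dz i := by
    simp only [a, b]
    rw [div_mul_div_comm, Real.mul_self_sqrt (hpos i).le, div_eq_iff (hpos i).ne']
    ring
  have hsum : ∑ i, (a i + b i) ^ 2 = ‖a‖₂ ^ 2 + ‖b‖₂ ^ 2 := by
    simp only [enorm_sq, add_sq, Finset.sum_add_distrib, mul_assoc, ← Finset.mul_sum, hab, horth]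
    ring
  have hbound (i : ι) : L * (a i + b i) ^ 2 ≤ (z i * dx i + x i * dz i) ^ 2 := by
    rw [show (a i + b i) ^ 2 = (z i * dx i + x i * dz i) ^ 2 / (x i * z i) by
        simp only [a, b]; rw [← add_div, div_pow, Real.sq_sqrt (hpos i).le],
      mul_div_assoc', div_le_iff₀ (hpos i), mul_comm]
    exact mul_le_mul_of_nonneg_left (hxz i) (sq_nonneg _)
  rw [← hsum, enorm_sq, Finset.mul_sum]
  exact Finset.sum_le_sum fun i _ => hbound i

theorem mul_enorm_cross_le (hL : 0 < L) (hxz : ∀ i, L ≤ x i * z i)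
    (horth : ∑ i, dx i * dz i = 0) (horth' : ∑ i, dx' i * dz' i = 0) :
    L * ‖fun i => dz i * dx' i + dx i * dz' i‖₂
      ≤ ‖fun i => z i * dx i + x i * dz i‖₂ * ‖fun i => z i * dx' i + x i * dz' i‖₂ := by
  set a := fun i => z i * dx i / √(x i * z i)
  set b := fun i => x i * dz i / √(x i * z i)
  set a' := fun i => z i * dx' i / √(x i * z i)
  set b' := fun i => x i * dz' i / √(x i * z i)
  have hP := mul_sum_sq_scaled_le hL hxz horth
  have hP' := mul_sum_sq_scaled_le (dx := dx') (dz := dz') hL hxz horth'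
  have hcross : ‖fun i => dz i * dx' i + dx i * dz' i‖₂ ≤ ‖b‖₂ * ‖a'‖₂ + ‖a‖₂ * ‖b'‖₂ := by
    have h (i : ι) : dz i * dx' i + dx i * dz' i = b i * a' i + a i * b' i := by
      have hpos : 0 < x i * z i := hL.trans_le (hxz i)
      simp only [a, b, a', b']
      rw [div_mul_div_comm, div_mul_div_comm, ← add_div, Real.mul_self_sqrt hpos.le,
        eq_div_iff hpos.ne']
      ring
    simp only [h]
    exact (enorm_add_le _ _).trans (add_le_add (enorm_mul_le b a') (enorm_mul_le a b'))
  have hcs : (‖b‖₂ * ‖a'‖₂ + ‖a‖₂ * ‖b'‖₂) ^ 2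
      ≤ (‖a‖₂ ^ 2 + ‖b‖₂ ^ 2) * (‖a'‖₂ ^ 2 + ‖b'‖₂ ^ 2) := by
    nlinarith [sq_nonneg (‖a‖₂ * ‖a'‖₂ - ‖b‖₂ * ‖b'‖₂)]
  have hsq : (L * (‖b‖₂ * ‖a'‖₂ + ‖a‖₂ * ‖b'‖₂)) ^ 2
      ≤ (‖fun i => z i * dx i + x i * dz i‖₂ * ‖fun i => z i * dx' i + x i * dz' i‖₂) ^ 2 := by
    calc _ ≤ L ^ 2 * ((‖a‖₂ ^ 2 + ‖b‖₂ ^ 2) * (‖a'‖₂ ^ 2 + ‖b'‖₂ ^ 2)) := by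
          rw [mul_pow]; gcongr
      _ = (L * (‖a‖₂ ^ 2 + ‖b‖₂ ^ 2)) * (L * (‖a'‖₂ ^ 2 + ‖b'‖₂ ^ 2)) := by ring
      _ ≤ _ := by rw [mul_pow]; gcongr
  calc _ ≤ L * (‖b‖₂ * ‖a'‖₂ + ‖a‖₂ * ‖b'‖₂) := by gcongr
    _ ≤ _ := le_of_sq_le_sq hsq (mul_nonneg (enorm_nonneg _) (enorm_nonneg _))

theorem two_mul_mul_enorm_mul_le (hL : 0 < L) (hxz : ∀ i, L ≤ x i * z i)
    (horth : ∑ i, dx i * dz i = 0) :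
    2 * L * ‖fun i => dx i * dz i‖₂ ≤ ‖fun i => z i * dx i + x i * dz i‖₂ ^ 2 := by
  have h := mul_enorm_cross_le hL hxz horth horth
  rw [show (fun i => dz i * dx i + dx i * dz i) = fun i => 2 * (dx i * dz i) by
    funext i; ring, enorm_const_mul, abs_two] at h
  linarith

end Scaling

section StepParameters

theorem step_bound_le_one_div_32 {σ : ℝ} (hσ0 : 0 < σ) (hσ1 : σ < 1) :
    σ * (1 - σ) / (10 * (1 - σ) + 4) ≤ 1 / 32 := by
  rw [div_le_iff₀ (by linarith)]
  nlinarith [sq_nonneg (σ - 21 / 32)]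

theorem step_bound_le_one_sub_div_four {σ : ℝ} (hσ0 : 0 < σ) (hσ1 : σ < 1) :
    σ * (1 - σ) / (10 * (1 - σ) + 4) ≤ (1 - σ) / 4 := by
  rw [div_le_div_iff₀ (by linarith) (by norm_num)]
  nlinarith [mul_pos hσ0 (sub_pos.2 hσ1)]

theorem le_three_mul_of_div_le {Q θ β : ℝ} (hθ : θ < 1) (hβ : 0 ≤ β)
    (h : Q / (2 ^ (3 / 2 : ℝ) * (1 - θ)) ≤ β) : Q ≤ 3 * (1 - θ) * β := by
  have h2 : (2 : ℝ) ^ (3 / 2 : ℝ) = 2 * √2 := by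
    rw [show (3 / 2 : ℝ) = 1 + 1 / 2 by norm_num, Real.rpow_add two_pos, Real.rpow_one,
      Real.sqrt_eq_rpow]
  have hsqrt : √2 ≤ 3 / 2 := Real.sqrt_le_iff.2 ⟨by norm_num, by norm_num⟩
  rw [h2, div_le_iff₀ (by positivity)] at h
  nlinarith [mul_nonneg (sub_nonneg.2 hθ.le) hβ]

theorem mul_add_sq_le {t ρ θ σ : ℝ} (ht : t ≤ 1 / 32) (hθ0 : 0 < θ)
    (hθ1 : θ < 16 / 25) (hσ0 : 0 < σ) (hσ1 : σ ≤ 1) (hρ : ρ ^ 2 ≤ 3 * (1 - θ) * (θ * σ)) :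
    t * (ρ + θ * σ / 4) ^ 2 ≤ θ * σ * (1 - θ) / 4 := by
  have hβ : 0 < θ * σ := mul_pos hθ0 hσ0
  have hβθ : θ * σ ≤ θ := mul_le_of_le_one_right hθ0.le hσ1
  have hS : (ρ + θ * σ / 4) ^ 2 ≤ θ * σ * (6 * (1 - θ) + 2 / 25) := by
    nlinarith [sq_nonneg (ρ - θ * σ / 4)]
  calc t * (ρ + θ * σ / 4) ^ 2 ≤ 1 / 32 * (θ * σ * (6 * (1 - θ) + 2 / 25)) :=
        mul_le_mul ht hS (sq_nonneg _) (by norm_num)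
    _ ≤ θ * σ * (1 - θ) / 4 := by nlinarith

end StepParameters

section QuasiNewton

variable {ι : Type*} {x z dx dz x1 z1 dx' dz' : ι → ℝ} {σ θ αk α γ μ μ1 : ℝ}

/-- Since `x1 ∘ z1 - x ∘ z = αk (z ∘ dx + x ∘ dz) + αk² dx ∘ dz`, the Broyden term keeps only the
second-order part of the step. -/
theorem quasiNewton_rhs_eq (hx1 : ∀ i, x1 i = x i + αk * dx i)
    (hz1 : ∀ i, z1 i = z i + αk * dz i)
    (hQN : ∀ i, z i * dx' i + x i * dz' i = σ * μ1 - x1 i * z1 i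
      + γ * (αk * (z i * dx i + x i * dz i) - (x1 i * z1 i - x i * z i))) (i : ι) :
    z i * dx' i + x i * dz' i = σ * μ1 - x1 i * z1 i - γ * αk ^ 2 * (dx i * dz i) := by
  rw [hQN, hx1, hz1]
  ring

theorem newtonResidual_quasiNewton_eq (hx1 : ∀ i, x1 i = x i + αk * dx i)
    (hz1 : ∀ i, z1 i = z i + αk * dz i)
    (hQN : ∀ i, z i * dx' i + x i * dz' i = σ * μ1 - x1 i * z1 i
      + γ * (αk * (z i * dx i + x i * dz i) - (x1 i * z1 i - x i * z i))) (i : ι) :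
    newtonResidual σ μ1 x1 z1 dx' dz' i
      = αk * (dz i * dx' i + dx i * dz' i) - γ * αk ^ 2 * (dx i * dz i) := by
  simp only [newtonResidual]
  linear_combination quasiNewton_rhs_eq hx1 hz1 hQN i + dx' i * hz1 i + dz' i * hx1 i

variable [Fintype ι]

theorem sum_newtonResidual_quasiNewton_eq_zero (hx1 : ∀ i, x1 i = x i + αk * dx i)
    (hz1 : ∀ i, z1 i = z i + αk * dz i)
    (hQN : ∀ i, z i * dx' i + x i * dz' i = σ * μ1 - x1 i * z1 i
      + γ * (αk * (z i * dx i + x i * dz i) - (x1 i * z1 i - x i * z i)))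
    (horth : ∑ i, dx i * dz i = 0) (horth₁₂ : ∑ i, dx i * dz' i = 0)
    (horth₂₁ : ∑ i, dx' i * dz i = 0) :
    ∑ i, newtonResidual σ μ1 x1 z1 dx' dz' i = 0 := by
  rw [Finset.sum_congr rfl fun i _ => newtonResidual_quasiNewton_eq hx1 hz1 hQN i]
  simp only [Finset.sum_sub_distrib, Finset.sum_add_distrib, ← Finset.mul_sum,
    mul_comm (dz _) (dx' _), horth, horth₁₂, horth₂₁]
  ring

theorem sub_mul_le_enorm_sub {w v e : ι → ℝ} (hαk0 : 0 ≤ αk)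
    (hw : ∑ i, w i = Fintype.card ι * μ) (he : ‖e‖₂ ≤ θ * σ * μ)
    (hstep : ∀ i, v i - w i = αk * (σ * μ - w i) + αk ^ 2 * e i) :
    αk * (√(Fintype.card ι) * (1 - σ) * μ) - αk ^ 2 * (θ * σ * μ) ≤ ‖fun i => v i - w i‖₂ := by
  have htri : αk * ‖fun i => σ * μ - w i‖₂ ≤ ‖fun i => v i - w i‖₂ + αk ^ 2 * ‖e‖₂ := by
    calc αk * ‖fun i => σ * μ - w i‖₂ = ‖fun i => αk * (σ * μ - w i)‖₂ := by
          rw [enorm_const_mul, abs_of_nonneg hαk0]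
      _ = ‖fun i => (v i - w i) - αk ^ 2 * e i‖₂ := by
          congr
          funext i
          linarith [hstep i]
      _ ≤ ‖fun i => v i - w i‖₂ + ‖fun i => αk ^ 2 * e i‖₂ := enorm_sub_le _ _
      _ = ‖fun i => v i - w i‖₂ + αk ^ 2 * ‖e‖₂ := by
          rw [enorm_const_mul, abs_of_nonneg (sq_nonneg αk)]
  nlinarith [mul_le_mul_of_nonneg_left (le_enorm_const_mul_sub σ hw) hαk0,
    mul_le_mul_of_nonneg_left he (sq_nonneg αk)]

theorem broyden_correction_le {w v e : ι → ℝ}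
    (hθ0 : 0 < θ) (hθ1 : θ < 16 / 25) (hσ0 : 0 < σ) (hσ1 : σ ≤ 1) (hαk0 : 0 < αk)
    (hαk : αk ≤ 1 / 32) (hαkσ : αk ≤ (1 - σ) / 4) (hcard : 1 ≤ Fintype.card ι)
    (hμ : 0 < μ) (hμ1 : 0 ≤ μ1)
    (hw : ∑ i, w i = Fintype.card ι * μ) (hv : ∑ i, v i = Fintype.card ι * μ1)
    (hN1 : ‖fun i => v i - μ1‖₂ ≤ θ * μ1) (he : ‖e‖₂ ≤ θ * σ * μ)
    (hstep : ∀ i, v i - w i = αk * (σ * μ - w i) + αk ^ 2 * e i)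
    (hγ : γ = (∑ i, (v i - w i) * (σ * μ1 - v i)) / ∑ i, (v i - w i) ^ 2) :
    |γ| * (αk ^ 2 * ‖e‖₂) ≤ θ * σ * μ1 / 4 := by
  set D := ‖fun i => v i - w i‖₂
  set sn := √(Fintype.card ι) * (1 - σ)
  have hsn : 1 - σ ≤ sn :=
    le_mul_of_one_le_left (by linarith) (Real.one_le_sqrt.2 (by exact_mod_cast hcard))
  have hsn2 : sn ^ 2 = Fintype.card ι * (1 - σ) ^ 2 := by
    rw [mul_pow, Real.sq_sqrt (Nat.cast_nonneg _)]
  have hγD : |γ| * D ≤ (sn + θ) * μ1 := by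
    refine hγ ▸ (abs_sum_mul_div_sum_sq_mul_enorm_le _ _).trans
      ((enorm_const_mul_sub_le σ hv hμ1 hN1).trans ?_)
    gcongr
    exact Real.sqrt_le_iff.2 ⟨by linarith, by nlinarith⟩
  have hD : αk * (sn * μ) - αk ^ 2 * (θ * σ * μ) ≤ D :=
    sub_mul_le_enorm_sub hαk0.le hw he hstep
  have hnum : αk * (4 * (sn + θ) + θ * σ) ≤ sn := by
    nlinarith [mul_le_mul_of_nonneg_left hαkσ hθ0.le, mul_le_mul_of_nonneg_left hσ1 hθ0.le,
      mul_le_mul_of_nonneg_right hαk (show 0 ≤ sn by linarith)]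
  have hDpos : 0 < αk * (sn * μ) - αk ^ 2 * (θ * σ * μ) := by
    nlinarith [mul_pos hαk0 hμ, mul_pos hαk0 (show 0 < sn + θ by linarith)]
  have key : |γ| * (αk ^ 2 * ‖e‖₂) * D ≤ θ * σ * μ1 / 4 * D := by
    calc |γ| * (αk ^ 2 * ‖e‖₂) * D = |γ| * D * (αk ^ 2 * ‖e‖₂) := by ring
      _ ≤ (sn + θ) * μ1 * (αk ^ 2 * (θ * σ * μ)) :=
          mul_le_mul hγD (by gcongr) (mul_nonneg (sq_nonneg _) (enorm_nonneg _))
            (mul_nonneg (by linarith) hμ1)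
      _ ≤ θ * σ * μ1 / 4 * (αk * (sn * μ) - αk ^ 2 * (θ * σ * μ)) := by
          nlinarith [mul_le_mul_of_nonneg_left hnum
            (by positivity : 0 ≤ θ * σ * μ * μ1 * αk)]
      _ ≤ θ * σ * μ1 / 4 * D := by gcongr
  exact le_of_mul_le_mul_right key (hDpos.trans_le hD)

theorem enorm_quasiNewton_rhs_le (hx1 : ∀ i, x1 i = x i + αk * dx i)
    (hz1 : ∀ i, z1 i = z i + αk * dz i)
    (hQN : ∀ i, z i * dx' i + x i * dz' i = σ * μ1 - x1 i * z1 i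
      + γ * (αk * (z i * dx i + x i * dz i) - (x1 i * z1 i - x i * z i)))
    (hμ1 : 0 ≤ μ1) (hv : ∑ i, x1 i * z1 i = Fintype.card ι * μ1)
    (hN1 : ‖fun i => x1 i * z1 i - μ1‖₂ ≤ θ * μ1)
    (hcorr : |γ| * (αk ^ 2 * ‖fun i => dx i * dz i‖₂) ≤ θ * σ * μ1 / 4) :
    ‖fun i => z i * dx' i + x i * dz' i‖₂
      ≤ (√(θ ^ 2 + Fintype.card ι * (1 - σ) ^ 2) + θ * σ / 4) * μ1 := by
  rw [show (fun i => z i * dx' i + x i * dz' i)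
      = fun i => (σ * μ1 - x1 i * z1 i) - γ * αk ^ 2 * (dx i * dz i) from
    funext (quasiNewton_rhs_eq hx1 hz1 hQN)]
  calc _ ≤ ‖fun i => σ * μ1 - x1 i * z1 i‖₂ + ‖fun i => γ * αk ^ 2 * (dx i * dz i)‖₂ :=
        enorm_sub_le _ _
    _ ≤ √(θ ^ 2 + Fintype.card ι * (1 - σ) ^ 2) * μ1 + θ * σ * μ1 / 4 := by
        gcongr
        · exact enorm_const_mul_sub_le σ hv hμ1 hN1
        · rwa [enorm_const_mul, abs_mul, abs_of_nonneg (sq_nonneg αk), mul_assoc]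
    _ = _ := by ring

theorem enorm_cross_quasiNewton_le {ρ : ℝ} (hθ0 : 0 < θ) (hθ1 : θ < 16 / 25) (hσ0 : 0 < σ)
    (hσ1 : σ ≤ 1) (hαk0 : 0 ≤ αk) (hαk : αk ≤ 1 / 32) (hμ : 0 < μ) (hμ1 : 0 ≤ μ1)
    (hN : ‖fun i => x i * z i - μ‖₂ ≤ θ * μ) (horth : ∑ i, dx i * dz i = 0)
    (horth' : ∑ i, dx' i * dz' i = 0) (hρ0 : 0 ≤ ρ) (hρ : ρ ^ 2 ≤ 3 * (1 - θ) * (θ * σ))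
    (hr : ‖fun i => z i * dx i + x i * dz i‖₂ ≤ ρ * μ)
    (hr' : ‖fun i => z i * dx' i + x i * dz' i‖₂ ≤ (ρ + θ * σ / 4) * μ1) :
    αk * ‖fun i => dz i * dx' i + dx i * dz' i‖₂ ≤ θ * σ * μ1 / 4 := by
  have hL : 0 < (1 - θ) * μ := mul_pos (by linarith) hμ
  have hcross := mul_enorm_cross_le hL (one_sub_mul_le_of_enorm_sub_le hN) horth horth'
  have hβ : 0 < θ * σ := mul_pos hθ0 hσ0
  refine le_of_mul_le_mul_left ?_ hL
  calc (1 - θ) * μ * (αk * ‖fun i => dz i * dx' i + dx i * dz' i‖₂)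
        = αk * ((1 - θ) * μ * ‖fun i => dz i * dx' i + dx i * dz' i‖₂) := by ring
    _ ≤ αk * (ρ * μ * ((ρ + θ * σ / 4) * μ1)) :=
        mul_le_mul_of_nonneg_left
          (hcross.trans (mul_le_mul hr hr' (enorm_nonneg _) (by positivity))) hαk0
    _ = αk * (ρ * (ρ + θ * σ / 4)) * (μ * μ1) := by ring
    _ ≤ αk * (ρ + θ * σ / 4) ^ 2 * (μ * μ1) := by
        rw [sq]
        gcongr
        linarith
    _ ≤ θ * σ * (1 - θ) / 4 * (μ * μ1) := by
        gcongr
        exact mul_add_sq_le hαk hθ0 hθ1 hσ0 hσ1 hρ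
    _ = (1 - θ) * μ * (θ * σ * μ1 / 4) := by ring

theorem quasiNewton_second_order_le {ρ : ℝ} (hθ0 : 0 < θ) (hθ1 : θ < 16 / 25) (hσ0 : 0 < σ)
    (hσ1 : σ ≤ 1) (hα0 : 0 ≤ α) (hα : α ≤ 1 / 32) (hμ : 0 < μ) (hμ1 : 0 ≤ μ1) (hμ1μ : μ1 ≤ μ)
    (hN : ‖fun i => x i * z i - μ‖₂ ≤ θ * μ) (horth' : ∑ i, dx' i * dz' i = 0)
    (hρ : ρ ^ 2 ≤ 3 * (1 - θ) * (θ * σ))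
    (hr' : ‖fun i => z i * dx' i + x i * dz' i‖₂ ≤ (ρ + θ * σ / 4) * μ1) :
    α * ‖fun i => dx' i * dz' i‖₂ ≤ θ * σ * μ1 / 8 := by
  have hL : 0 < (1 - θ) * μ := mul_pos (by linarith) hμ
  have hprod := two_mul_mul_enorm_mul_le hL (one_sub_mul_le_of_enorm_sub_le hN) horth'
  have hβ : 0 < θ * σ := mul_pos hθ0 hσ0
  refine le_of_mul_le_mul_left ?_ (by positivity : 0 < 2 * ((1 - θ) * μ))
  calc 2 * ((1 - θ) * μ) * (α * ‖fun i => dx' i * dz' i‖₂)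
        = α * (2 * ((1 - θ) * μ) * ‖fun i => dx' i * dz' i‖₂) := by ring
    _ ≤ α * ((ρ + θ * σ / 4) * μ1) ^ 2 := by
        gcongr
        exact hprod.trans (pow_le_pow_left₀ (enorm_nonneg _) hr' 2)
    _ = α * (ρ + θ * σ / 4) ^ 2 * (μ1 * μ1) := by ring
    _ ≤ θ * σ * (1 - θ) / 4 * (μ * μ1) :=
        mul_le_mul (mul_add_sq_le hα hθ0 hθ1 hσ0 hσ1 hρ) (mul_le_mul_of_nonneg_right hμ1μ hμ1)
          (mul_nonneg hμ1 hμ1) (div_nonneg (mul_nonneg hβ.le (by linarith)) (by norm_num))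
    _ = 2 * ((1 - θ) * μ) * (θ * σ * μ1 / 8) := by ring

theorem enorm_newtonResidual_quasiNewton_add_le (hθ0 : 0 < θ) (hθ1 : θ < 16 / 25) (hσ0 : 0 < σ)
    (hσ1 : σ ≤ 1) (hαk0 : 0 < αk) (hαk : αk ≤ 1 / 32) (hαkσ : αk ≤ (1 - σ) / 4) (hα0 : 0 ≤ α)
    (hα : α ≤ 1 / 32) (hcard : 1 ≤ Fintype.card ι) (hμ : 0 < μ) (hμ1 : 0 ≤ μ1) (hμ1μ : μ1 ≤ μ)
    (hw : ∑ i, x i * z i = Fintype.card ι * μ) (hv : ∑ i, x1 i * z1 i = Fintype.card ι * μ1)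
    (hN : ‖fun i => x i * z i - μ‖₂ ≤ θ * μ) (hN1 : ‖fun i => x1 i * z1 i - μ1‖₂ ≤ θ * μ1)
    (he : ‖fun i => dx i * dz i‖₂ ≤ θ * σ * μ)
    (hρ : θ ^ 2 + Fintype.card ι * (1 - σ) ^ 2 ≤ 3 * (1 - θ) * (θ * σ))
    (horth : ∑ i, dx i * dz i = 0) (horth' : ∑ i, dx' i * dz' i = 0)
    (hx1 : ∀ i, x1 i = x i + αk * dx i) (hz1 : ∀ i, z1 i = z i + αk * dz i)
    (hNewton : ∀ i, z i * dx i + x i * dz i = σ * μ - x i * z i)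
    (hQN : ∀ i, z i * dx' i + x i * dz' i = σ * μ1 - x1 i * z1 i
      + γ * (αk * (z i * dx i + x i * dz i) - (x1 i * z1 i - x i * z i)))
    (hγ : γ = (∑ i, (x1 i * z1 i - x i * z i) * (σ * μ1 - x1 i * z1 i))
      / ∑ i, (x1 i * z1 i - x i * z i) ^ 2) :
    ‖newtonResidual σ μ1 x1 z1 dx' dz'‖₂ + α * ‖fun i => dx' i * dz' i‖₂ ≤ θ * σ * μ1 := by
  set ρ := √(θ ^ 2 + Fintype.card ι * (1 - σ) ^ 2)
  have hρ' : ρ ^ 2 ≤ 3 * (1 - θ) * (θ * σ) := by rwa [Real.sq_sqrt (by positivity)]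
  have hcorr := broyden_correction_le hθ0 hθ1 hσ0 hσ1 hαk0 hαk hαkσ hcard hμ hμ1 hw hv hN1 he
    (fun i => by rw [hx1, hz1]; linear_combination αk * hNewton i) hγ
  have hr : ‖fun i => z i * dx i + x i * dz i‖₂ ≤ ρ * μ := by
    rw [show (fun i => z i * dx i + x i * dz i) = fun i => σ * μ - x i * z i from funext hNewton]
    exact enorm_const_mul_sub_le σ hw hμ.le hN
  have hr' := enorm_quasiNewton_rhs_le hx1 hz1 hQN hμ1 hv hN1 hcorr
  have hcross := enorm_cross_quasiNewton_le hθ0 hθ1 hσ0 hσ1 hαk0.le hαk hμ hμ1 hN horth horth'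
    (Real.sqrt_nonneg _) hρ' hr hr'
  have hsecond := quasiNewton_second_order_le hθ0 hθ1 hσ0 hσ1 hα0 hα hμ hμ1 hμ1μ hN horth' hρ' hr'
  have hres : ‖newtonResidual σ μ1 x1 z1 dx' dz'‖₂
      ≤ αk * ‖fun i => dz i * dx' i + dx i * dz' i‖₂
        + |γ| * (αk ^ 2 * ‖fun i => dx i * dz i‖₂) := by
    rw [show newtonResidual σ μ1 x1 z1 dx' dz'
        = fun i => αk * (dz i * dx' i + dx i * dz' i) - γ * αk ^ 2 * (dx i * dz i) from
      funext (newtonResidual_quasiNewton_eq hx1 hz1 hQN)]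
    refine (enorm_sub_le _ _).trans_eq ?_
    rw [enorm_const_mul, enorm_const_mul, abs_of_pos hαk0, abs_mul, abs_of_nonneg (sq_nonneg αk),
      mul_assoc]
  nlinarith [mul_nonneg (mul_pos hθ0 hσ0).le hμ1]

end QuasiNewton

end QuasiNewtonN2

open QuasiNewtonN2 in
theorem qn_step_stays_in_N2_general
    (n m : ℕ) (hn : 1 ≤ n)
    (A : Matrix (Fin m) (Fin n) ℝ) (b : Fin m → ℝ) (c : Fin n → ℝ)
    (xk zk : Fin n → ℝ)
    (lamk : Fin m → ℝ)
    (hfeas1 : A.mulVec xk = b)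
    (hfeas2 : (Matrix.transpose A).mulVec lamk + zk = c)
    (σ θ αk α γ₁ : ℝ)
    (Δx Δz Δx' Δz' : Fin n → ℝ) (Δlam Δlam' : Fin m → ℝ)
    (μk : ℝ) (hμk : μk = (∑ i, xk i * zk i) / n)
    (hAx : A.mulVec Δx = 0)
    (hAl : (Matrix.transpose A).mulVec Δlam + Δz = 0)
    (hNewton : ∀ i, zk i * Δx i + xk i * Δz i = σ * μk - xk i * zk i)
    (xk1 zk1 : Fin n → ℝ)
    (hxk1 : xk1 = fun i => xk i + αk * Δx i)
    (hzk1 : zk1 = fun i => zk i + αk * Δz i)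
    (hxk1pos : ∀ i, 0 < xk1 i) (hzk1pos : ∀ i, 0 < zk1 i)
    (μk1 : ℝ) (hμk1 : μk1 = (∑ i, xk1 i * zk1 i) / n)
    (hAx' : A.mulVec Δx' = 0)
    (hAl' : (Matrix.transpose A).mulVec Δlam' + Δz' = 0)
    (hQN : ∀ i, zk i * Δx' i + xk i * Δz' i
      = σ * μk1 - xk1 i * zk1 i
        + γ₁ * (αk * (zk i * Δx i + xk i * Δz i) - (xk1 i * zk1 i - xk i * zk i)))
    (hθ : θ ∈ Set.Ioo (0:ℝ) (16/25))
    (hσ : σ ∈ Set.Ioo (0:ℝ) 1)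
    (hcond : (θ ^ 2 + n * (1 - σ) ^ 2) / ((2:ℝ) ^ ((3:ℝ)/2) * (1 - θ)) ≤ θ * σ)
    (hN2k : _root_.enorm (fun i => xk i * zk i - μk) ≤ θ * μk)
    (hN2k1 : _root_.enorm (fun i => xk1 i * zk1 i - μk1) ≤ θ * μk1)
    (hErr : _root_.enorm (fun i => Δx i * Δz i)
      ≤ (θ ^ 2 + n * (1 - σ) ^ 2) / ((2:ℝ) ^ ((3:ℝ)/2) * (1 - θ)) * μk)
    (hγ₁ : γ₁ = (∑ i, (xk1 i * zk1 i - xk i * zk i) * (σ * μk1 - xk1 i * zk1 i))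
      / (∑ i, (xk1 i * zk1 i - xk i * zk i) ^ 2))
    (hαk : αk ∈ Set.Ioc (0:ℝ)
      (min ((1 - σ) / (4 * σ)) (σ * (1 - σ) / (10 * (1 - σ) + 4))))
    (hα : α ∈ Set.Icc αk (σ * (1 - σ) / (10 * (1 - σ) + 4)))
    (xk2 zk2 : Fin n → ℝ) (lamk2 : Fin m → ℝ)
    (hxk2 : xk2 = fun i => xk1 i + α * Δx' i)
    (hzk2 : zk2 = fun i => zk1 i + α * Δz' i)
    (hlamk2 : lamk2 = fun i => lamk i + αk * Δlam i + α * Δlam' i)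
    (μα : ℝ) (hμα : μα = (∑ i, xk2 i * zk2 i) / n) :
    A.mulVec xk2 = b ∧
    (Matrix.transpose A).mulVec lamk2 + zk2 = c ∧
    (∀ i, 0 < xk2 i) ∧ (∀ i, 0 < zk2 i) ∧
    _root_.enorm (fun i => xk2 i * zk2 i - μα) ≤ θ * μα := by
  obtain ⟨hθ0, hθ1⟩ := hθ
  obtain ⟨hσ0, hσ1⟩ := hσ
  obtain ⟨hαk0, hαk⟩ := hαk
  have hαk' := hαk.trans (min_le_right _ _)
  have hαkσ := hαk'.trans (step_bound_le_one_sub_div_four hσ0 hσ1)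
  have hα' := hα.2.trans (step_bound_le_one_div_32 hσ0 hσ1)
  have hαk32 := hαk'.trans (step_bound_le_one_div_32 hσ0 hσ1)
  have : NeZero n := ⟨by omega⟩
  have hmean {u : Fin n → ℝ} {ν : ℝ} (h : ν = (∑ i, u i) / n) :
      ∑ i, u i = Fintype.card (Fin n) * ν := by
    rw [h, Fintype.card_fin, mul_div_cancel₀ _ (by simp; omega)]
  have horth := sum_mul_eq_zero_of_mulVec hAx hAl
  have horth' := sum_mul_eq_zero_of_mulVec hAx' hAl'
  subst hxk1 hzk1 hxk2 hzk2 hlamk2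
  have hμk1' : μk1 = (1 - αk * (1 - σ)) * μk := mean_along_eq (σ := σ) (hmean hμk)
    (Finset.sum_eq_zero fun i _ => sub_eq_zero.2 (hNewton i)) horth (hmean hμk1)
  have hμk1pos : 0 < μk1 := by
    rw [hμk1]
    exact div_pos (Finset.sum_pos (fun i _ => mul_pos (hxk1pos i) (hzk1pos i))
      Finset.univ_nonempty) (by positivity)
  have hfac : 0 < 1 - αk * (1 - σ) := by nlinarith
  have hμkpos : 0 < μk := pos_of_mul_pos_right (hμk1' ▸ hμk1pos) hfac.le
  have hres := enorm_newtonResidual_quasiNewton_add_le hθ0 hθ1 hσ0 hσ1.le hαk0 hαk32 hαkσ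
    (hαk0.le.trans hα.1) hα' (by simp; omega) hμkpos hμk1pos.le
    (by rw [hμk1']; nlinarith [mul_pos (mul_pos hαk0 (sub_pos.2 hσ1)) hμkpos]) (hmean hμk)
    (hmean hμk1) hN2k hN2k1 (hErr.trans (mul_le_mul_of_nonneg_right hcond hμkpos.le))
    (by simpa using le_three_mul_of_div_le (by linarith) (mul_pos hθ0 hσ0).le hcond)
    horth horth' (fun _ => rfl) (fun _ => rfl) hNewton hQN hγ₁
  obtain ⟨hx, hz, hN⟩ := step_mem_N2 hxk1pos hzk1pos hμk1pos (by linarith) hσ0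
    (hαk0.le.trans hα.1) (by linarith) hN2k1 hres
  have hμα' : μα = (1 - α * (1 - σ)) * μk1 := mean_along_eq (hmean hμk1)
    (sum_newtonResidual_quasiNewton_eq_zero (fun _ => rfl) (fun _ => rfl) hQN horth
      (sum_mul_eq_zero_of_mulVec hAx hAl') (sum_mul_eq_zero_of_mulVec hAx' hAl)) horth' (hmean hμα)
  exact ⟨mulVec_add_mul_eq (mulVec_add_mul_eq hfeas1 hAx αk) hAx' α,
    transpose_mulVec_add_mul_add_eq (transpose_mulVec_add_mul_add_eq hfeas2 hAl αk) hAl' α,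
    hx, hz, hμα' ▸ hN⟩

/-- Feasible quasi-Newton step stays in the `N₂(θ)` neighborhood
(here `σ = σk = σk1` and `θ = θk = θk1`). -/
theorem qn_step_stays_in_N2
    (n m : ℕ) (hn : 1 ≤ n) (hm : 1 ≤ m)
    (A : Matrix (Fin m) (Fin n) ℝ) (b : Fin m → ℝ) (c : Fin n → ℝ)
    (xk zk : Fin n → ℝ) (hxk : ∀ i, 0 < xk i) (hzk : ∀ i, 0 < zk i)
    (lamk : Fin m → ℝ)
    (hfeas1 : A.mulVec xk = b)
    (hfeas2 : (Matrix.transpose A).mulVec lamk + zk = c)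
    (σ θ αk α γ₁ : ℝ)
    (Δx Δz Δx' Δz' : Fin n → ℝ) (Δlam Δlam' : Fin m → ℝ)
    (μk : ℝ) (hμk : μk = (∑ i, xk i * zk i) / n)
    (hAx : A.mulVec Δx = 0)
    (hAl : (Matrix.transpose A).mulVec Δlam + Δz = 0)
    (hNewton : ∀ i, zk i * Δx i + xk i * Δz i = σ * μk - xk i * zk i)
    (xk1 zk1 : Fin n → ℝ)
    (hxk1 : xk1 = fun i => xk i + αk * Δx i)
    (hzk1 : zk1 = fun i => zk i + αk * Δz i)
    (hxk1pos : ∀ i, 0 < xk1 i) (hzk1pos : ∀ i, 0 < zk1 i)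
    (μk1 : ℝ) (hμk1 : μk1 = (∑ i, xk1 i * zk1 i) / n)
    (hAx' : A.mulVec Δx' = 0)
    (hAl' : (Matrix.transpose A).mulVec Δlam' + Δz' = 0)
    (hQN : ∀ i, zk i * Δx' i + xk i * Δz' i
      = σ * μk1 - xk1 i * zk1 i
        + γ₁ * (αk * (zk i * Δx i + xk i * Δz i) - (xk1 i * zk1 i - xk i * zk i)))
    (hθ : θ ∈ Set.Ioo (0:ℝ) (16/25))
    (hσ : σ ∈ Set.Ioo (0:ℝ) 1)
    (hcond : (θ ^ 2 + n * (1 - σ) ^ 2) / ((2:ℝ) ^ ((3:ℝ)/2) * (1 - θ)) ≤ θ * σ)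
    (hN2k : _root_.enorm (fun i => xk i * zk i - μk) ≤ θ * μk)
    (hN2k1 : _root_.enorm (fun i => xk1 i * zk1 i - μk1) ≤ θ * μk1)
    (hErr : _root_.enorm (fun i => Δx i * Δz i)
      ≤ (θ ^ 2 + n * (1 - σ) ^ 2) / ((2:ℝ) ^ ((3:ℝ)/2) * (1 - θ)) * μk)
    (hγ₁ : γ₁ = (∑ i, (xk1 i * zk1 i - xk i * zk i) * (σ * μk1 - xk1 i * zk1 i))
      / (∑ i, (xk1 i * zk1 i - xk i * zk i) ^ 2))
    (hαk : αk ∈ Set.Ioc (0:ℝ)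
      (min ((1 - σ) / (4 * σ)) (σ * (1 - σ) / (10 * (1 - σ) + 4))))
    (hα : α ∈ Set.Icc αk (σ * (1 - σ) / (10 * (1 - σ) + 4)))
    (xk2 zk2 : Fin n → ℝ) (lamk2 : Fin m → ℝ)
    (hxk2 : xk2 = fun i => xk1 i + α * Δx' i)
    (hzk2 : zk2 = fun i => zk1 i + α * Δz' i)
    (hlamk2 : lamk2 = fun i => lamk i + αk * Δlam i + α * Δlam' i)
    (μα : ℝ) (hμα : μα = (∑ i, xk2 i * zk2 i) / n) :
    A.mulVec xk2 = b ∧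
    (Matrix.transpose A).mulVec lamk2 + zk2 = c ∧
    (∀ i, 0 < xk2 i) ∧ (∀ i, 0 < zk2 i) ∧
    _root_.enorm (fun i => xk2 i * zk2 i - μα) ≤ θ * μα :=
  qn_step_stays_in_N2_general n m hn A b c xk zk lamk hfeas1 hfeas2 σ θ αk α γ₁ Δx Δz Δx' Δz' Δlam
    Δlam' μk hμk hAx hAl hNewton xk1 zk1 hxk1 hzk1 hxk1pos hzk1pos μk1 hμk1 hAx' hAl' hQN hθ hσ
    hcond hN2k hN2k1 hErr hγ₁ hαk hα xk2 zk2 lamk2 hxk2 hzk2 hlamk2 μα hμα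
end

section
/- Assume γ ∈ (0,1) and the symmetric-neighborhood bounds γμ_{k+1} ≤ x^{k+1}_i z^{k+1}_i ≤ μ_{k+1}/γ for every i, that μ_{k+1} = (1 − ᾱ_k(1 − σ_k))μ_k, and that ᾱ_k ∈ (0,1], σ_k ∈ [0,1) and σ_{k+1} ∈ [0,1]. Let y ∈ ℝ^{2n+m} be any vector whose last n components equal x^{k+1}∘z^{k+1} − x^k∘z^k, let v = (0, 0, σ_{k+1}μ_{k+1}e − x^{k+1}∘z^{k+1}) ∈ ℝ^{2n+m}, and set γ₁ = (yᵀv)/(yᵀy). Then y ≠ 0 and |γ₁| ≤ 2√n / ((1 − σ_k)·ᾱ_k·γ). -/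
open scoped BigOperators

/-!
Only the last block `w = x^{k+1}∘z^{k+1} − x^k∘z^k` of `y` meets `v`, so Cauchy–Schwarz gives
`|γ₁| ≤ ‖v‖ / ‖w‖`. The entries of `w` sum to `n(μ_{k+1} − μ_k) = −n ᾱ_k(1 − σ_k) μ_k`, hence
`‖w‖ ≥ ᾱ_k(1 − σ_k) μ_k`, while the neighborhood bound `x^{k+1}_i z^{k+1}_i ≤ μ_{k+1}/γ` puts every
entry of `v` in `[−μ_{k+1}/γ, μ_{k+1}/γ]`, so `‖v‖ ≤ √n μ_{k+1}/γ`. Finally `μ_{k+1} ≤ μ_k`.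
-/

section Dotp

variable {ι : Type*} [Fintype ι]

theorem dotp_sq_le_dotp_self_mul_dotp_self (u v : ι → ℝ) :
    dotp u v ^ 2 ≤ dotp u u * dotp v v := by
  simp only [dotp, ← sq]
  exact Finset.sum_mul_sq_le_sq_mul_sq Finset.univ u v

theorem sq_sum_le_card_mul_dotp_self (w : ι → ℝ) :
    (∑ i, w i) ^ 2 ≤ Fintype.card ι * dotp w w := by
  simpa only [dotp, ← sq, Finset.card_univ] using
    sq_sum_le_card_mul_sum_sq (s := Finset.univ) (f := w)

theorem sq_le_dotp_self_of_sum_eq_card_mul [Nonempty ι] {w : ι → ℝ} {s : ℝ}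
    (h : ∑ i, w i = Fintype.card ι * s) : s ^ 2 ≤ dotp w w := by
  have hcard : (1 : ℝ) ≤ Fintype.card ι := by exact_mod_cast Fintype.card_pos
  refine (le_mul_of_one_le_left (sq_nonneg s) hcard).trans
    (le_of_mul_le_mul_left ?_ (zero_lt_one.trans_le hcard))
  calc (Fintype.card ι : ℝ) * (Fintype.card ι * s ^ 2) = (∑ i, w i) ^ 2 := by rw [h]; ring
    _ ≤ Fintype.card ι * dotp w w := sq_sum_le_card_mul_dotp_self w

theorem dotp_self_le_of_abs_le {u : ι → ℝ} {b : ℝ} (hu : ∀ i, |u i| ≤ b) :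
    dotp u u ≤ Fintype.card ι * b ^ 2 := by
  calc dotp u u ≤ ∑ _i : ι, b ^ 2 :=
        Finset.sum_le_sum fun i _ => by
          rw [← abs_mul_abs_self, ← sq]
          exact pow_le_pow_left₀ (abs_nonneg _) (hu i) 2
    _ = Fintype.card ι * b ^ 2 := by simp

theorem abs_dotp_div_le {w u : ι → ℝ} {Q a B : ℝ} (ha : 0 < a) (hB : 0 ≤ B)
    (hwQ : dotp w w ≤ Q) (hw : a ^ 2 ≤ dotp w w) (hu : dotp u u ≤ B ^ 2) :
    |dotp w u / Q| ≤ B / a := by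
  have hA : 0 < dotp w w := (pow_pos ha 2).trans_le hw
  refine abs_le_of_sq_le_sq ?_ (div_nonneg hB ha.le)
  calc (dotp w u / Q) ^ 2 = dotp w u ^ 2 / Q ^ 2 := div_pow _ _ _
    _ ≤ dotp w u ^ 2 / dotp w w ^ 2 := by gcongr
    _ ≤ dotp w w * dotp u u / dotp w w ^ 2 := by
        gcongr; exact dotp_sq_le_dotp_self_mul_dotp_self w u
    _ = dotp u u / dotp w w := by field_simp
    _ ≤ B ^ 2 / a ^ 2 := div_le_div₀ (sq_nonneg B) hu (pow_pos ha 2) hw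
    _ = (B / a) ^ 2 := (div_pow _ _ _).symm

variable {κ : Type*} [Fintype κ]

theorem dotp_sum_elim_zero_right (y : ι ⊕ κ → ℝ) (u : κ → ℝ) :
    dotp y (Sum.elim (fun _ => 0) u) = dotp (y ∘ Sum.inr) u := by
  simp [dotp, Fintype.sum_sum_type]

theorem dotp_comp_inr_self_le (y : ι ⊕ κ → ℝ) :
    dotp (y ∘ Sum.inr) (y ∘ Sum.inr) ≤ dotp y y := by
  rw [dotp, dotp, Fintype.sum_sum_type]
  exact le_add_of_nonneg_left (Finset.sum_nonneg fun i _ => mul_self_nonneg _)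

end Dotp

theorem abs_mul_sub_le_of_le_div {μ γ σ t : ℝ} (hμ : 0 ≤ μ) (hγ0 : 0 < γ) (hγ1 : γ ≤ 1)
    (hσ : σ ∈ Set.Icc (0 : ℝ) 1) (ht : 0 ≤ t) (htμ : t ≤ μ / γ) :
    |σ * μ - t| ≤ μ / γ := by
  have hμγ : μ ≤ μ / γ := le_div_self hμ hγ0 hγ1
  have hσμ : σ * μ ≤ μ := mul_le_of_le_one_left hμ hσ.2
  have hσμ0 : 0 ≤ σ * μ := mul_nonneg hσ.1 hμ
  exact abs_sub_le_iff.2 ⟨by linarith, by linarith⟩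

theorem gamma1_bound_Ns_general
    (n m : ℕ) (hn : 1 ≤ n)
    (xk zk xk1 zk1 : Fin n → ℝ)
    (hxk : ∀ i, 0 < xk i) (hzk : ∀ i, 0 < zk i)
    (μk μk1 : ℝ)
    (hμk : μk = (∑ i, xk i * zk i) / n)
    (hμk1 : μk1 = (∑ i, xk1 i * zk1 i) / n)
    (γ : ℝ) (hγ : γ ∈ Set.Ioo (0:ℝ) 1)
    (hNbr : ∀ i, γ * μk1 ≤ xk1 i * zk1 i ∧ xk1 i * zk1 i ≤ μk1 / γ)
    (σk σk1 αk : ℝ)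
    (hαk : αk ∈ Set.Ioc (0:ℝ) 1)
    (hσk : σk ∈ Set.Ico (0:ℝ) 1)
    (hσk1 : σk1 ∈ Set.Icc (0:ℝ) 1)
    (hμrel : μk1 = (1 - αk * (1 - σk)) * μk)
    (y : Fin n ⊕ Fin m ⊕ Fin n → ℝ)
    (hy : ∀ i, y (Sum.inr (Sum.inr i)) = xk1 i * zk1 i - xk i * zk i)
    (v : Fin n ⊕ Fin m ⊕ Fin n → ℝ)
    (hv : v = blk (fun _ => 0) (fun _ => 0) (fun i => σk1 * μk1 - xk1 i * zk1 i))
    (γ₁ : ℝ) (hγ₁ : γ₁ = dotp y v / dotp y y) :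
    y ≠ 0 ∧ |γ₁| ≤ 2 * Real.sqrt n / ((1 - σk) * αk * γ) := by
  obtain ⟨hγ0, hγ1⟩ := hγ
  set c := αk * (1 - σk)
  have hc0 : 0 < c := mul_pos hαk.1 (sub_pos.2 hσk.2)
  have hc1 : c ≤ 1 := mul_le_one₀ hαk.2 (sub_nonneg.2 hσk.2.le) (by linarith [hσk.1])
  have : Nonempty (Fin n) := ⟨⟨0, hn⟩⟩
  have hn0 : (0 : ℝ) < n := by exact_mod_cast hn
  have hμk0 : 0 < μk := hμk ▸ div_pos
    (Finset.sum_pos (fun i _ => mul_pos (hxk i) (hzk i)) Finset.univ_nonempty) hn0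
  have hμk1_nonneg : 0 ≤ μk1 := hμrel ▸ mul_nonneg (sub_nonneg.2 hc1) hμk0.le
  have hμk1_le : μk1 ≤ μk := by nlinarith
  set w := y ∘ Sum.inr ∘ Sum.inr
  have hw_sum : ∑ i, w i = Fintype.card (Fin n) * -(c * μk) := by
    simp only [w, Function.comp, hy, Finset.sum_sub_distrib, Fintype.card_fin]
    linear_combination (eq_div_iff hn0.ne').1 hμk - (eq_div_iff hn0.ne').1 hμk1 + n * hμrel
  have hw : (c * μk) ^ 2 ≤ dotp w w := neg_sq (c * μk) ▸ sq_le_dotp_self_of_sum_eq_card_mul hw_sum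
  have hv_tail : dotp (fun i => σk1 * μk1 - xk1 i * zk1 i) (fun i => σk1 * μk1 - xk1 i * zk1 i)
      ≤ (Real.sqrt n * (μk1 / γ)) ^ 2 := by
    rw [mul_pow, Real.sq_sqrt hn0.le]
    simpa using dotp_self_le_of_abs_le fun i => abs_mul_sub_le_of_le_div hμk1_nonneg hγ0 hγ1.le
      hσk1 ((mul_nonneg hγ0.le hμk1_nonneg).trans (hNbr i).1) (hNbr i).2
  have hγ₁_le : |γ₁| ≤ Real.sqrt n * (μk1 / γ) / (c * μk) := by
    rw [hγ₁, hv, blk, dotp_sum_elim_zero_right, dotp_sum_elim_zero_right]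
    exact abs_dotp_div_le (mul_pos hc0 hμk0) (by positivity)
      ((dotp_comp_inr_self_le _).trans (dotp_comp_inr_self_le y)) hw hv_tail
  refine ⟨fun hy0 => ?_, hγ₁_le.trans ?_⟩
  · have hw0 : dotp w w = 0 := by simp [w, hy0, dotp]
    exact (pow_pos (mul_pos hc0 hμk0) 2).not_ge (hw0 ▸ hw)
  · calc Real.sqrt n * (μk1 / γ) / (c * μk) ≤ Real.sqrt n * (μk / γ) / (c * μk) := by gcongr
      _ = Real.sqrt n / (c * γ) := by field_simp
      _ ≤ 2 * Real.sqrt n / ((1 - σk) * αk * γ) := by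
          rw [show (1 - σk) * αk * γ = c * γ by ring]
          gcongr
          linarith [Real.sqrt_nonneg n]

/-- Bound on the quasi-Newton projection scalar `γ₁` in the symmetric
neighborhood `N_s(γ)`. -/
theorem gamma1_bound_Ns
    (n m : ℕ) (hn : 1 ≤ n) (hm : 1 ≤ m)
    (xk zk xk1 zk1 : Fin n → ℝ)
    (hxk : ∀ i, 0 < xk i) (hzk : ∀ i, 0 < zk i)
    (hxk1 : ∀ i, 0 < xk1 i) (hzk1 : ∀ i, 0 < zk1 i)
    (μk μk1 : ℝ)
    (hμk : μk = (∑ i, xk i * zk i) / n)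
    (hμk1 : μk1 = (∑ i, xk1 i * zk1 i) / n)
    (γ : ℝ) (hγ : γ ∈ Set.Ioo (0:ℝ) 1)
    (hNbr : ∀ i, γ * μk1 ≤ xk1 i * zk1 i ∧ xk1 i * zk1 i ≤ μk1 / γ)
    (σk σk1 αk : ℝ)
    (hαk : αk ∈ Set.Ioc (0:ℝ) 1)
    (hσk : σk ∈ Set.Ico (0:ℝ) 1)
    (hσk1 : σk1 ∈ Set.Icc (0:ℝ) 1)
    (hμrel : μk1 = (1 - αk * (1 - σk)) * μk)
    (y : Fin n ⊕ Fin m ⊕ Fin n → ℝ)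
    (hy : ∀ i, y (Sum.inr (Sum.inr i)) = xk1 i * zk1 i - xk i * zk i)
    (v : Fin n ⊕ Fin m ⊕ Fin n → ℝ)
    (hv : v = blk (fun _ => 0) (fun _ => 0) (fun i => σk1 * μk1 - xk1 i * zk1 i))
    (γ₁ : ℝ) (hγ₁ : γ₁ = dotp y v / dotp y y) :
    y ≠ 0 ∧ |γ₁| ≤ 2 * Real.sqrt n / ((1 - σk) * αk * γ) :=
  gamma1_bound_Ns_general n m hn xk zk xk1 zk1 hxk hzk μk μk1 hμk hμk1 γ hγ hNbr σk σk1 αk hαk hσk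
    hσk1 hμrel y hy v hv γ₁ hγ₁
end

section
/- Infeasible bound on the quasi-Newton projection scalar: let y ∈ ℝ^{2n+m} be any vector whose last n components equal x^{k+1}∘z^{k+1} − x^k∘z^k, let v = (−r_c^{k+1}, −r_b^{k+1}, σ_{k+1}μ_{k+1}e − x^{k+1}∘z^{k+1}), and set γ₁ = (yᵀv)/(yᵀy). Assume γ ∈ (0,1), β ≥ 1, ξ > 0, α_dec ∈ (0,1), ᾱ_k ∈ (0,1], σ_{k+1} ∈ [0,1]; that x^{k+1}_i z^{k+1}_i ≤ μ_{k+1}/γ for every i; that ‖(r_b^{k+1}, r_c^{k+1})‖ ≤ (R₀/ξ²)·β·μ_{k+1} where R₀ = ‖(r_b⁰, r_c⁰)‖ is the norm of the initial residuals (and μ₀ = ξ² is the initial gap); and the sufficient decrease μ_{k+1} ≤ (1 − α_dec·ᾱ_k)μ_k. Then y ≠ 0 and |γ₁| ≤ C₃·√n/ᾱ_k, where C₃ = 2(γ·α_dec)⁻¹·√( (R₀βγ/ξ²)² + 1 ); moreover C₃ ≥ 1. -/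
open scoped BigOperators

/-!
By Cauchy–Schwarz, `|γ₁| ≤ ‖v‖ / ‖y‖`. Sufficient decrease together with `μ_{k+1} > 0` gives
`μ_k - μ_{k+1} ≥ α_dec ᾱ_k μ_{k+1}`, and the last block of `y` sums to `n (μ_{k+1} - μ_k)`, so
`‖y‖ ≥ √n α_dec ᾱ_k μ_{k+1}`. On the other side, the residual bound controls the first two blocks
of `v`, and every entry of the third block lies in `[-μ_{k+1}/γ, μ_{k+1}/γ]` because both
`σ_{k+1} μ_{k+1}` and `x^{k+1}_i z^{k+1}_i` lie in `[0, μ_{k+1}/γ]`; hence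
`‖v‖ ≤ √n (μ_{k+1}/γ) √((R₀βγ/ξ²)² + 1)`. The quotient is `C₃ / (2 ᾱ_k)`.
-/

open Finset

section DotProduct

variable {ι κ : Type*} [Fintype ι] [Fintype κ]

lemma dotp_self_nonneg (u : ι → ℝ) : 0 ≤ dotp u u :=
  sum_nonneg fun i _ => mul_self_nonneg (u i)

lemma sq_enorm (u : ι → ℝ) : _root_.enorm u ^ 2 = dotp u u := by
  rw [_root_.enorm, Real.sq_sqrt (sum_nonneg fun i _ => sq_nonneg (u i))]
  simp only [dotp, sq]

lemma dotp_neg_neg (u w : ι → ℝ) : dotp (fun i => -u i) (fun i => -w i) = dotp u w := by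
  simp only [dotp, neg_mul_neg]

lemma dotp_sum_elim (u w : ι → ℝ) (u' w' : κ → ℝ) :
    dotp (Sum.elim u u') (Sum.elim w w') = dotp u w + dotp u' w' := by
  simp only [dotp, Fintype.sum_sum_type, Sum.elim_inl, Sum.elim_inr]

lemma dotp_self_comp_inr_le (f : κ ⊕ ι → ℝ) :
    dotp (fun i => f (Sum.inr i)) (fun i => f (Sum.inr i)) ≤ dotp f f := by
  have hf : f = Sum.elim (fun i => f (Sum.inl i)) (fun i => f (Sum.inr i)) := by
    ext (i | i) <;> rfl
  conv_rhs => rw [hf, dotp_sum_elim]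
  linarith [dotp_self_nonneg fun i => f (Sum.inl i)]

lemma sq_dotp_le_dotp_self_mul_dotp_self (u w : ι → ℝ) :
    dotp u w ^ 2 ≤ dotp u u * dotp w w := by
  simpa only [dotp, sq] using sum_mul_sq_le_sq_mul_sq univ u w

lemma abs_dotp_div_dotp_self_le {u w : ι → ℝ} {B : ℝ} (hB : 0 ≤ B)
    (h : dotp w w ≤ B ^ 2 * dotp u u) : |dotp u w / dotp u u| ≤ B := by
  rcases (dotp_self_nonneg u).eq_or_lt with hu | hu
  · rwa [← hu, div_zero, abs_zero]
  rw [abs_div, abs_of_pos hu, div_le_iff₀ hu]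
  refine abs_le_of_sq_le_sq ?_ (by positivity)
  calc dotp u w ^ 2 ≤ dotp u u * dotp w w := sq_dotp_le_dotp_self_mul_dotp_self u w
    _ ≤ dotp u u * (B ^ 2 * dotp u u) := by gcongr
    _ = (B * dotp u u) ^ 2 := by ring

lemma card_mul_sq_le_dotp_self {u : ι → ℝ} {c : ℝ} (hc : 0 ≤ c)
    (h : Fintype.card ι * c ≤ |∑ i, u i|) : Fintype.card ι * c ^ 2 ≤ dotp u u := by
  rcases (Nat.cast_nonneg (α := ℝ) (Fintype.card ι)).eq_or_lt with hι | hι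
  · rw [← hι, zero_mul]; exact dotp_self_nonneg u
  refine le_of_mul_le_mul_left ?_ hι
  calc Fintype.card ι * (Fintype.card ι * c ^ 2) = (Fintype.card ι * c) ^ 2 := by ring
    _ ≤ |∑ i, u i| ^ 2 := by gcongr
    _ = (∑ i, u i) ^ 2 := sq_abs _
    _ ≤ Fintype.card ι * dotp u u := by
      simpa only [dotp, sq, card_univ] using sq_sum_le_card_mul_sum_sq (s := univ) (f := u)

lemma dotp_self_le_card_mul_sq {u : ι → ℝ} {M : ℝ} (h : ∀ i, |u i| ≤ M) :
    dotp u u ≤ Fintype.card ι * M ^ 2 := by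
  calc dotp u u ≤ ∑ _i : ι, M ^ 2 := sum_le_sum fun i _ => by
        rw [← sq]; exact sq_le_sq' (abs_le.mp (h i)).1 (abs_le.mp (h i)).2
    _ = Fintype.card ι * M ^ 2 := by rw [sum_const, card_univ, nsmul_eq_mul]

end DotProduct

lemma dotp_self_blk {n m : ℕ} (u : Fin n → ℝ) (v : Fin m → ℝ) (w : Fin n → ℝ) :
    dotp (blk u v w) (blk u v w) = dotp v v + dotp u u + dotp w w := by
  rw [blk, dotp_sum_elim, dotp_sum_elim]; ring

lemma dotp_self_blk_neg_neg_le {n m : ℕ} (u : Fin n → ℝ) (v : Fin m → ℝ) (w : Fin n → ℝ)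
    {R M : ℝ} (hR : _root_.enorm (Sum.elim v u) ≤ R) (hw : ∀ i, |w i| ≤ M) :
    dotp (blk (fun i => -u i) (fun i => -v i) w) (blk (fun i => -u i) (fun i => -v i) w)
      ≤ R ^ 2 + n * M ^ 2 := by
  have hres : dotp v v + dotp u u ≤ R ^ 2 := by
    rw [← dotp_sum_elim, ← sq_enorm]
    exact pow_le_pow_left₀ (Real.sqrt_nonneg _) hR 2
  have hw' := dotp_self_le_card_mul_sq hw
  rw [Fintype.card_fin] at hw'
  rw [dotp_self_blk, dotp_neg_neg, dotp_neg_neg]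
  linarith

lemma mul_le_sub_of_le_one_sub_mul {c μ μ' : ℝ} (hμ' : 0 < μ') (hc : 0 ≤ c) (hc1 : c ≤ 1)
    (h : μ' ≤ (1 - c) * μ) : c * μ' ≤ μ - μ' := by
  have hμ : 0 ≤ μ := by
    by_contra! hμ
    nlinarith [mul_nonneg (sub_nonneg.2 hc1) (neg_nonneg.2 hμ.le)]
  have hμ'μ : μ' ≤ μ := by nlinarith
  nlinarith [mul_le_mul_of_nonneg_left hμ'μ hc]

lemma card_mul_sq_le_dotp_self_of_mean_decrease {n m : ℕ} (hn : 0 < n)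
    {x z x' z' : Fin n → ℝ} {y : Fin n ⊕ Fin m ⊕ Fin n → ℝ}
    (hy : ∀ i, y (Sum.inr (Sum.inr i)) = x' i * z' i - x i * z i) {c : ℝ} (hc : 0 ≤ c)
    (hdec : c ≤ (∑ i, x i * z i) / n - (∑ i, x' i * z' i) / n) :
    n * c ^ 2 ≤ dotp y y := by
  have hn0 : (0 : ℝ) < n := by exact_mod_cast hn
  have hsum : ∑ i, y (Sum.inr (Sum.inr i))
      = -(n * ((∑ i, x i * z i) / n - (∑ i, x' i * z' i) / n)) := by
    simp only [hy, sum_sub_distrib]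
    field_simp
    ring
  have h := card_mul_sq_le_dotp_self (u := fun i => y (Sum.inr (Sum.inr i))) hc (by
    rw [Fintype.card_fin, hsum, abs_neg, abs_of_nonneg (by positivity [hc.trans hdec])]
    gcongr)
  rw [Fintype.card_fin] at h
  exact h.trans ((dotp_self_comp_inr_le _).trans (dotp_self_comp_inr_le y))

lemma dotp_self_blk_le_of_mem_Icc {n m : ℕ} (hn : 1 ≤ n) (rb : Fin m → ℝ) (rc : Fin n → ℝ)
    (p : Fin n → ℝ) {K μ γ σ : ℝ} (hμ : 0 ≤ μ) (hγ0 : 0 < γ) (hγ1 : γ ≤ 1)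
    (hσ : σ ∈ Set.Icc (0 : ℝ) 1) (hp : ∀ i, p i ∈ Set.Icc 0 (μ / γ))
    (hres : _root_.enorm (Sum.elim rb rc) ≤ K * μ) :
    dotp (blk (fun i => -rc i) (fun i => -rb i) (fun i => σ * μ - p i))
        (blk (fun i => -rc i) (fun i => -rb i) (fun i => σ * μ - p i))
      ≤ n * (μ / γ) ^ 2 * ((K * γ) ^ 2 + 1) := by
  have hσμ : σ * μ ∈ Set.Icc 0 (μ / γ) :=
    ⟨mul_nonneg hσ.1 hμ, (mul_le_of_le_one_left hμ hσ.2).trans (le_div_self hμ hγ0 hγ1)⟩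
  have hw : ∀ i, |σ * μ - p i| ≤ μ / γ := fun i =>
    abs_sub_le_of_nonneg_of_le hσμ.1 hσμ.2 (hp i).1 (hp i).2
  refine (dotp_self_blk_neg_neg_le rc rb _ hres hw).trans ?_
  have hKμ : (K * μ) ^ 2 = (μ / γ) ^ 2 * (K * γ) ^ 2 := by
    field_simp
  have hn1 : (1 : ℝ) ≤ n := by exact_mod_cast hn
  rw [hKμ]
  nlinarith [mul_nonneg (sub_nonneg.2 hn1) (mul_nonneg (sq_nonneg (μ / γ)) (sq_nonneg (K * γ)))]

lemma one_le_two_mul_inv_mul_sqrt_sq_add_one {a : ℝ} (ha0 : 0 < a) (ha1 : a ≤ 1) (b : ℝ) :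
    1 ≤ 2 * a⁻¹ * √(b ^ 2 + 1) := by
  have h1 : 1 ≤ a⁻¹ := (one_le_inv₀ ha0).2 ha1
  have h2 : 1 ≤ √(b ^ 2 + 1) := Real.one_le_sqrt.2 (le_add_of_nonneg_left (sq_nonneg b))
  nlinarith

theorem inf_gamma1_bound_general
    (n m : ℕ) (hn : 1 ≤ n)
    (xk zk xk1 zk1 : Fin n → ℝ)
    (hxk1 : ∀ i, 0 < xk1 i) (hzk1 : ∀ i, 0 < zk1 i)
    (μk μk1 : ℝ)
    (hμk : μk = (∑ i, xk i * zk i) / n)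
    (hμk1 : μk1 = (∑ i, xk1 i * zk1 i) / n)
    (rb1 : Fin m → ℝ) (rc1 : Fin n → ℝ)
    (γ β ξ αdec αk σk1 : ℝ)
    (hγ : γ ∈ Set.Ioo (0:ℝ) 1)
    (hαdec : αdec ∈ Set.Ioo (0:ℝ) 1)
    (hαk : αk ∈ Set.Ioc (0:ℝ) 1)
    (hσk1 : σk1 ∈ Set.Icc (0:ℝ) 1)
    (hupper : ∀ i, xk1 i * zk1 i ≤ μk1 / γ)
    (R0 : ℝ)
    (hres : _root_.enorm (Sum.elim rb1 rc1) ≤ R0 / ξ ^ 2 * β * μk1)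
    (hdec : μk1 ≤ (1 - αdec * αk) * μk)
    (y : Fin n ⊕ Fin m ⊕ Fin n → ℝ)
    (hy : ∀ i, y (Sum.inr (Sum.inr i)) = xk1 i * zk1 i - xk i * zk i)
    (v : Fin n ⊕ Fin m ⊕ Fin n → ℝ)
    (hv : v = blk (fun i => -rc1 i) (fun i => -rb1 i)
      (fun i => σk1 * μk1 - xk1 i * zk1 i))
    (γ₁ C₃ : ℝ)
    (hγ₁ : γ₁ = dotp y v / dotp y y)
    (hC₃ : C₃ = 2 * (γ * αdec)⁻¹ * Real.sqrt ((R0 * β * γ / ξ ^ 2) ^ 2 + 1)) :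
    y ≠ 0 ∧ |γ₁| ≤ C₃ * Real.sqrt n / αk ∧ 1 ≤ C₃ := by
  obtain ⟨hγ0, hγ1⟩ := hγ
  obtain ⟨hαdec0, hαdec1⟩ := hαdec
  obtain ⟨hαk0, hαk1⟩ := hαk
  have hμk1_pos : 0 < μk1 := hμk1 ▸ div_pos (sum_pos (fun i _ => mul_pos (hxk1 i) (hzk1 i))
    (univ_nonempty_iff.2 ⟨⟨0, hn⟩⟩)) (by exact_mod_cast hn)
  have hgap : αdec * αk * μk1 ≤ μk - μk1 :=
    mul_le_sub_of_le_one_sub_mul hμk1_pos (by positivity) (mul_le_one₀ hαdec1.le hαk0.le hαk1) hdec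
  have hyy : n * (αdec * αk * μk1) ^ 2 ≤ dotp y y :=
    card_mul_sq_le_dotp_self_of_mean_decrease hn hy (by positivity) (by rwa [← hμk, ← hμk1])
  have hvv : dotp v v ≤ n * (μk1 / γ) ^ 2 * ((R0 / ξ ^ 2 * β * γ) ^ 2 + 1) :=
    hv ▸ dotp_self_blk_le_of_mem_Icc hn rb1 rc1 (fun i => xk1 i * zk1 i) hμk1_pos.le hγ0 hγ1.le
      hσk1 (fun i => ⟨(mul_pos (hxk1 i) (hzk1 i)).le, hupper i⟩) hres
  have hB : dotp v v ≤ (C₃ / (2 * αk)) ^ 2 * dotp y y :=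
    calc dotp v v ≤ n * (μk1 / γ) ^ 2 * ((R0 / ξ ^ 2 * β * γ) ^ 2 + 1) := hvv
      _ = (C₃ / (2 * αk)) ^ 2 * (n * (αdec * αk * μk1) ^ 2) := by
        set s := √((R0 * β * γ / ξ ^ 2) ^ 2 + 1)
        have hs : s ^ 2 = (R0 * β * γ / ξ ^ 2) ^ 2 + 1 := Real.sq_sqrt (by positivity)
        rw [hC₃, show R0 / ξ ^ 2 * β * γ = R0 * β * γ / ξ ^ 2 by ring, ← hs]
        field_simp
      _ ≤ (C₃ / (2 * αk)) ^ 2 * dotp y y := by gcongr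
  have hC₃_one : 1 ≤ C₃ :=
    hC₃ ▸ one_le_two_mul_inv_mul_sqrt_sq_add_one (by positivity)
      (mul_le_one₀ hγ1.le hαdec0.le hαdec1.le) _
  refine ⟨?_, ?_, hC₃_one⟩
  · rintro rfl
    simp only [dotp, Pi.zero_apply, mul_zero, sum_const_zero] at hyy
    exact hyy.not_gt (by positivity)
  · calc |γ₁| ≤ C₃ / (2 * αk) := hγ₁ ▸ abs_dotp_div_dotp_self_le (by positivity) hB
      _ = C₃ * (1 / 2) / αk := by ring
      _ ≤ C₃ * √n / αk := by
        gcongr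
        calc (1 / 2 : ℝ) ≤ 1 := by norm_num
          _ ≤ √n := Real.one_le_sqrt.2 (by exact_mod_cast hn)

/-- Infeasible-case bound on the quasi-Newton projection scalar `γ₁`. -/
theorem inf_gamma1_bound
    (n m : ℕ) (hn : 1 ≤ n) (hm : 1 ≤ m)
    (xk zk xk1 zk1 : Fin n → ℝ)
    (hxk : ∀ i, 0 < xk i) (hzk : ∀ i, 0 < zk i)
    (hxk1 : ∀ i, 0 < xk1 i) (hzk1 : ∀ i, 0 < zk1 i)
    (μk μk1 : ℝ)
    (hμk : μk = (∑ i, xk i * zk i) / n)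
    (hμk1 : μk1 = (∑ i, xk1 i * zk1 i) / n)
    (rb1 : Fin m → ℝ) (rc1 : Fin n → ℝ)
    (rb0 : Fin m → ℝ) (rc0 : Fin n → ℝ)
    (γ β ξ αdec αk σk1 : ℝ)
    (hγ : γ ∈ Set.Ioo (0:ℝ) 1) (hβ : 1 ≤ β) (hξ : 0 < ξ)
    (hαdec : αdec ∈ Set.Ioo (0:ℝ) 1)
    (hαk : αk ∈ Set.Ioc (0:ℝ) 1)
    (hσk1 : σk1 ∈ Set.Icc (0:ℝ) 1)
    (hupper : ∀ i, xk1 i * zk1 i ≤ μk1 / γ)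
    (R0 : ℝ) (hR0 : R0 = _root_.enorm (Sum.elim rb0 rc0))
    (hres : _root_.enorm (Sum.elim rb1 rc1) ≤ R0 / ξ ^ 2 * β * μk1)
    (hdec : μk1 ≤ (1 - αdec * αk) * μk)
    (y : Fin n ⊕ Fin m ⊕ Fin n → ℝ)
    (hy : ∀ i, y (Sum.inr (Sum.inr i)) = xk1 i * zk1 i - xk i * zk i)
    (v : Fin n ⊕ Fin m ⊕ Fin n → ℝ)
    (hv : v = blk (fun i => -rc1 i) (fun i => -rb1 i)
      (fun i => σk1 * μk1 - xk1 i * zk1 i))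
    (γ₁ C₃ : ℝ)
    (hγ₁ : γ₁ = dotp y v / dotp y y)
    (hC₃ : C₃ = 2 * (γ * αdec)⁻¹ * Real.sqrt ((R0 * β * γ / ξ ^ 2) ^ 2 + 1)) :
    y ≠ 0 ∧ |γ₁| ≤ C₃ * Real.sqrt n / αk ∧ 1 ≤ C₃ :=
  inf_gamma1_bound_general n m hn xk zk xk1 zk1 hxk1 hzk1 μk μk1 hμk hμk1 rb1 rc1 γ β ξ αdec αk σk1
    hγ hαdec hαk hσk1 hupper R0 hres hdec y hy v hv γ₁ C₃ hγ₁ hC₃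
end

section
/- Under the infeasible two-step setup, the scaled combined third-row residual satisfies ‖ (x^k∘z^k)^{−1/2} ∘ [ z^k∘(ᾱ_kΔx^k + ᾱΔx′) + x^k∘(ᾱ_kΔz^k + ᾱΔz′) ] ‖ ≤ γ^{−1/2}·[ (σ_max + γ^{−1})(ᾱ_k + ᾱ) + (ᾱ_k + C₃)·ᾱ·ᾱ_k·ω² ]·n^{5/2}·μ_k^{1/2}, where (x^k∘z^k)^{−1/2} denotes the componentwise vector with entries 1/√(x^k_i z^k_i). -/
open scoped BigOperators

/-!
Write `w = x ∘ z` and `p = Δx ∘ Δz`. The Newton equation gives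
`x⁺ ∘ z⁺ = (1 - ᾱₖ) w + ᾱₖ σₖ μₖ e + ᾱₖ² p`, so the unscaled combined residual splits into a part
affine in `w`, bounded componentwise by `(ᾱₖ + ᾱ)(σ_max + γ⁻¹) μₖ` in the neighbourhood
`γ μₖ ≤ wᵢ ≤ μₖ / γ`, and the quadratic part `ᾱ ᾱₖ² (σₖ₊₁ mean(p) e - p) - ᾱ γ₁ ᾱₖ² p`.
Replacing `p` by `σ mean(p) e - p` with `0 ≤ σ ≤ 2` does not increase its norm, and
`‖p‖ ≤ ‖D⁻¹Δx‖ ‖DΔz‖ ≤ ω² n² μₖ`. The scaling by `(x ∘ z)^(-1/2)` costs at most `(γ μₖ)^(-1/2)`.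
-/

open Finset

namespace InteriorPoint

section EuclideanNorm

variable {ι : Type*} [Fintype ι]

theorem enorm_nonneg (v : ι → ℝ) : 0 ≤ _root_.enorm v := Real.sqrt_nonneg _

theorem enorm_eq_norm_toLp (v : ι → ℝ) : _root_.enorm v = ‖WithLp.toLp 2 v‖ := by
  simp only [_root_.enorm, EuclideanSpace.norm_eq, Real.norm_eq_abs, sq_abs]

protected theorem enorm_add_le (v w : ι → ℝ) :
    _root_.enorm (fun i => v i + w i) ≤ _root_.enorm v + _root_.enorm w := by
  simp only [enorm_eq_norm_toLp]
  exact norm_add_le (WithLp.toLp 2 v) (WithLp.toLp 2 w)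

theorem enorm_const_mul (a : ℝ) (v : ι → ℝ) :
    _root_.enorm (fun i => a * v i) = |a| * _root_.enorm v := by
  rw [_root_.enorm, _root_.enorm, ← Real.sqrt_sq_eq_abs, ← Real.sqrt_mul (sq_nonneg _), mul_sum]
  simp only [mul_pow]

theorem enorm_le_mul_of_abs_le {v w : ι → ℝ} {c : ℝ} (hc : 0 ≤ c)
    (h : ∀ i, |v i| ≤ c * |w i|) : _root_.enorm v ≤ c * _root_.enorm w := by
  have hsq : ∑ i, v i ^ 2 ≤ c ^ 2 * ∑ i, w i ^ 2 := by
    rw [mul_sum]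
    refine sum_le_sum fun i _ => ?_
    rw [← sq_abs (v i), ← sq_abs (w i), ← mul_pow]
    exact pow_le_pow_left₀ (abs_nonneg _) (h i) 2
  calc _root_.enorm v ≤ Real.sqrt (c ^ 2 * ∑ i, w i ^ 2) := Real.sqrt_le_sqrt hsq
    _ = c * _root_.enorm w := by rw [Real.sqrt_mul (sq_nonneg c), Real.sqrt_sq hc, _root_.enorm]

theorem enorm_le_sqrt_card_mul {v : ι → ℝ} {c : ℝ} (hc : 0 ≤ c) (h : ∀ i, |v i| ≤ c) :
    _root_.enorm v ≤ Real.sqrt (Fintype.card ι) * c := by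
  have hsq : ∑ i, v i ^ 2 ≤ Fintype.card ι * c ^ 2 := by
    calc ∑ i, v i ^ 2 ≤ ∑ _i : ι, c ^ 2 := sum_le_sum fun i _ => by
          rw [← sq_abs]
          exact pow_le_pow_left₀ (abs_nonneg _) (h i) 2
      _ = Fintype.card ι * c ^ 2 := by simp
  calc _root_.enorm v ≤ Real.sqrt (Fintype.card ι * c ^ 2) := Real.sqrt_le_sqrt hsq
    _ = Real.sqrt (Fintype.card ι) * c := by rw [Real.sqrt_mul (by positivity), Real.sqrt_sq hc]

theorem enorm_mul_le (v w : ι → ℝ) :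
    _root_.enorm (fun i => v i * w i) ≤ _root_.enorm v * _root_.enorm w := by
  rw [_root_.enorm, _root_.enorm, _root_.enorm, ← Real.sqrt_mul (sum_nonneg fun i _ => sq_nonneg _),
    sum_mul]
  refine Real.sqrt_le_sqrt (sum_le_sum fun i _ => ?_)
  rw [mul_pow]
  exact mul_le_mul_of_nonneg_left (single_le_sum (fun j _ => sq_nonneg (w j)) (mem_univ i))
    (sq_nonneg _)

theorem enorm_smul_mean_sub_le {σ : ℝ} (hσ0 : 0 ≤ σ) (hσ2 : σ ≤ 2) (p : ι → ℝ) :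
    _root_.enorm (fun i => σ * ((∑ j, p j) / Fintype.card ι) - p i) ≤ _root_.enorm p := by
  set N : ℝ := (Fintype.card ι : ℝ)
  set S := ∑ j, p j
  have hcross : N * (σ * (S / N)) ^ 2 - 2 * (σ * (S / N)) * S = (σ ^ 2 - 2 * σ) * S ^ 2 / N := by
    rcases eq_or_ne N 0 with hN | hN
    · simp [hN]
    · field_simp
  have hnonpos : (σ ^ 2 - 2 * σ) * S ^ 2 / N ≤ 0 :=
    div_nonpos_of_nonpos_of_nonneg
      (mul_nonpos_of_nonpos_of_nonneg (by nlinarith) (sq_nonneg S)) (Nat.cast_nonneg _)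
  refine Real.sqrt_le_sqrt ?_
  have hexpand : ∑ i, (σ * (S / N) - p i) ^ 2
      = N * (σ * (S / N)) ^ 2 - 2 * (σ * (S / N)) * S + ∑ i, p i ^ 2 := by
    simp only [sub_sq, sum_add_distrib, sum_sub_distrib, sum_const, card_univ, nsmul_eq_mul,
      ← mul_sum, S, N]
  linarith

theorem enorm_inv_sqrt_mul_le {w : ι → ℝ} {c : ℝ} (hc : 0 < c) (hw : ∀ i, c ≤ w i)
    (r : ι → ℝ) :
    _root_.enorm (fun i => 1 / Real.sqrt (w i) * r i) ≤ _root_.enorm r / Real.sqrt c := by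
  rw [div_eq_inv_mul]
  refine enorm_le_mul_of_abs_le (by positivity) fun i => ?_
  rw [abs_mul, abs_of_nonneg (by positivity), one_div]
  gcongr
  exact hw i

theorem enorm_mul_le_of_diagonal_scaling {x z : ι → ℝ} (hx : ∀ i, 0 < x i) (hz : ∀ i, 0 < z i)
    (u v : ι → ℝ) :
    _root_.enorm (fun i => u i * v i)
      ≤ _root_.enorm (fun i => Real.sqrt (z i / x i) * u i)
        * _root_.enorm (fun i => Real.sqrt (x i / z i) * v i) := by
  refine le_of_eq_of_le (congrArg _root_.enorm (funext fun i => ?_)) (enorm_mul_le _ _)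
  have hone : Real.sqrt (z i / x i) * Real.sqrt (x i / z i) = 1 := by
    rw [← Real.sqrt_mul (div_nonneg (hz i).le (hx i).le), div_mul_div_cancel₀ (hx i).ne',
      div_self (hz i).ne', Real.sqrt_one]
  linear_combination (-(u i * v i)) * hone

end EuclideanNorm

theorem mul_add_newton_step {x z Δx Δz t α : ℝ} (h : z * Δx + x * Δz = t - x * z) :
    (x + α * Δx) * (z + α * Δz) = (1 - α) * (x * z) + α * t + α ^ 2 * (Δx * Δz) := by
  linear_combination α * h

theorem sum_mul_add_newton_step_div {n : ℕ} (hn : n ≠ 0) {x z Δx Δz : Fin n → ℝ} {μ σ : ℝ}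
    (α : ℝ) (hμ : μ = (∑ i, x i * z i) / n)
    (hNewton : ∀ i, z i * Δx i + x i * Δz i = σ * μ - x i * z i) :
    (∑ i, (x i + α * Δx i) * (z i + α * Δz i)) / n
      = (1 - α + α * σ) * μ + α ^ 2 * ((∑ i, Δx i * Δz i) / n) := by
  simp only [mul_add_newton_step (hNewton _), sum_add_distrib, sum_const, ← mul_sum, card_univ,
    Fintype.card_fin, nsmul_eq_mul]
  rw [hμ]
  field_simp

theorem abs_linear_residual_le {γ μ w σ σ' σmax αk α : ℝ} (hγ0 : 0 < γ) (hγ1 : γ ≤ 1)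
    (hμ : 0 ≤ μ) (hw0 : 0 ≤ w) (hwμ : w ≤ μ / γ) (hσ0 : 0 ≤ σ) (hσ : σ ≤ σmax) (hσ'0 : 0 ≤ σ')
    (hσ' : σ' ≤ σmax) (hσmax : σmax ≤ 1) (hαk0 : 0 ≤ αk) (hαk1 : αk ≤ 1) (hα : 0 ≤ α) :
    |αk * (σ * μ - w) + α * (σ' * ((1 - αk + αk * σ) * μ) - ((1 - αk) * w + αk * (σ * μ)))|
      ≤ (αk + α) * ((σmax + γ⁻¹) * μ) := by
  have hμγ : μ ≤ γ⁻¹ * μ := le_mul_of_one_le_left hμ ((one_le_inv₀ hγ0).2 hγ1)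
  have hwγ : w ≤ γ⁻¹ * μ := by rwa [div_eq_inv_mul] at hwμ
  have hσμ : σ * μ ≤ σmax * μ := mul_le_mul_of_nonneg_right hσ hμ
  have hσmaxμ : σmax * μ ≤ μ := mul_le_of_le_one_left hμ hσmax
  have hσmaxμ0 : 0 ≤ σmax * μ := mul_nonneg (hσ0.trans hσ) hμ
  have hstep0 : 0 ≤ 1 - αk + αk * σ := by nlinarith
  have hstep1 : (1 - αk + αk * σ) * μ ≤ μ := by nlinarith
  have hNewton : |σ * μ - w| ≤ (σmax + γ⁻¹) * μ :=
    abs_sub_le_of_nonneg_of_le (by positivity) (by linarith) hw0 (by linarith)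
  have hQN : |σ' * ((1 - αk + αk * σ) * μ) - ((1 - αk) * w + αk * (σ * μ))|
      ≤ (σmax + γ⁻¹) * μ :=
    abs_sub_le_of_nonneg_of_le (by positivity) (by nlinarith)
      (add_nonneg (mul_nonneg (sub_nonneg.2 hαk1) hw0) (by positivity)) (by nlinarith)
  calc _ ≤ αk * |σ * μ - w|
        + α * |σ' * ((1 - αk + αk * σ) * μ) - ((1 - αk) * w + αk * (σ * μ))| := by
        refine (abs_add_le _ _).trans_eq ?_
        rw [abs_mul, abs_mul, abs_of_nonneg hαk0, abs_of_nonneg hα]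
    _ ≤ αk * ((σmax + γ⁻¹) * μ) + α * ((σmax + γ⁻¹) * μ) := by gcongr
    _ = (αk + α) * ((σmax + γ⁻¹) * μ) := by ring

theorem enorm_quadratic_residual_le {n : ℕ} (hn : 1 ≤ n) {σ γ₁ C αk α : ℝ} (hσ0 : 0 ≤ σ)
    (hσ2 : σ ≤ 2) (hαk : 0 < αk) (hα : 0 ≤ α) (hγ₁ : |γ₁| ≤ C * Real.sqrt n / αk)
    (p : Fin n → ℝ) :
    _root_.enorm (fun i => α * αk ^ 2 * (σ * ((∑ j, p j) / n) - p i) + -(α * γ₁ * αk ^ 2) * p i)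
      ≤ (αk + C) * α * αk * Real.sqrt n * _root_.enorm p := by
  have hmean := enorm_smul_mean_sub_le hσ0 hσ2 p
  rw [Fintype.card_fin] at hmean
  have hsqrt : 1 ≤ Real.sqrt n := Real.one_le_sqrt.2 (by exact_mod_cast hn)
  have hγ₁αk : |γ₁| * αk ^ 2 ≤ C * Real.sqrt n * αk := by
    have := (le_div_iff₀ hαk).1 hγ₁
    nlinarith
  have hp0 := enorm_nonneg p
  calc _ ≤ _ := InteriorPoint.enorm_add_le _ _
    _ ≤ α * αk ^ 2 * _root_.enorm p + α * |γ₁| * αk ^ 2 * _root_.enorm p := by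
        simp only [enorm_const_mul, abs_neg, abs_mul, abs_of_nonneg hα,
          abs_of_nonneg (sq_nonneg αk)]
        gcongr
    _ = α * _root_.enorm p * (αk ^ 2 + |γ₁| * αk ^ 2) := by ring
    _ ≤ α * _root_.enorm p * (αk ^ 2 * Real.sqrt n + C * Real.sqrt n * αk) := by
        gcongr
        nlinarith
    _ = (αk + C) * α * αk * Real.sqrt n * _root_.enorm p := by ring

theorem enorm_decomposed_residual_le {n : ℕ} (hn : 1 ≤ n) {γ μ σ σ' σmax ω C γ₁ αk α : ℝ}
    (hγ0 : 0 < γ) (hγ1 : γ ≤ 1) (hμ : 0 ≤ μ) (hσ0 : 0 ≤ σ) (hσ : σ ≤ σmax) (hσ'0 : 0 ≤ σ')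
    (hσ' : σ' ≤ σmax) (hσmax : σmax < 1) (hαk0 : 0 < αk) (hαk1 : αk ≤ 1) (hα : 0 ≤ α)
    (hC : 0 ≤ C) (hγ₁ : |γ₁| ≤ C * Real.sqrt n / αk) {w p : Fin n → ℝ} (hw0 : ∀ i, 0 ≤ w i)
    (hwμ : ∀ i, w i ≤ μ / γ) (hp : _root_.enorm p ≤ ω ^ 2 * n ^ 2 * μ) :
    _root_.enorm (fun i =>
        (αk * (σ * μ - w i) + α * (σ' * ((1 - αk + αk * σ) * μ) - ((1 - αk) * w i + αk * (σ * μ))))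
          + (α * αk ^ 2 * (σ' * ((∑ j, p j) / n) - p i) + -(α * γ₁ * αk ^ 2) * p i))
      ≤ ((σmax + γ⁻¹) * (αk + α) + (αk + C) * α * αk * ω ^ 2) * (n ^ 2 * Real.sqrt n) * μ := by
  have hB : 0 ≤ σmax + γ⁻¹ := add_nonneg (hσ0.trans hσ) (inv_pos.2 hγ0).le
  have hlin := enorm_le_sqrt_card_mul (by positivity) fun i =>
    abs_linear_residual_le hγ0 hγ1 hμ (hw0 i) (hwμ i) hσ0 hσ hσ'0 hσ' hσmax.le hαk0.le hαk1 hα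
  rw [Fintype.card_fin] at hlin
  have hquad := enorm_quadratic_residual_le hn hσ'0 (by linarith) hαk0 hα hγ₁ p
  have hn2 : (1:ℝ) ≤ n ^ 2 := one_le_pow₀ (by exact_mod_cast hn)
  have hslack : 0 ≤ (σmax + γ⁻¹) * (αk + α) * μ * Real.sqrt n * (n ^ 2 - 1) := by
    have := sub_nonneg.2 hn2
    positivity
  calc _ ≤ _ := InteriorPoint.enorm_add_le _ _
    _ ≤ Real.sqrt n * ((αk + α) * ((σmax + γ⁻¹) * μ))
        + (αk + C) * α * αk * Real.sqrt n * (ω ^ 2 * n ^ 2 * μ) :=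
      add_le_add hlin (hquad.trans (mul_le_mul_of_nonneg_left hp (by positivity)))
    _ ≤ _ := by nlinarith

theorem rpow_neg_half_mul_rpow_five_halves_mul_rpow_half {γ μ : ℝ} (hγ : 0 < γ) (hμ : 0 < μ)
    (K : ℝ) {n : ℝ} (hn : 0 ≤ n) :
    γ ^ (-(1:ℝ)/2) * K * n ^ ((5:ℝ)/2) * μ ^ ((1:ℝ)/2)
      = K * (n ^ 2 * Real.sqrt n) * μ / Real.sqrt (γ * μ) := by
  rw [show -(1:ℝ)/2 = -(1/2) by norm_num, Real.rpow_neg hγ.le, ← Real.sqrt_eq_rpow,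
    ← Real.sqrt_eq_rpow, show (5:ℝ)/2 = 2 + 1/2 by norm_num, Real.rpow_add' hn (by norm_num),
    ← Real.sqrt_eq_rpow, Real.rpow_two, Real.sqrt_mul hγ.le]
  have hμ' := Real.sq_sqrt hμ.le
  have := Real.sqrt_pos.2 hμ
  have := Real.sqrt_pos.2 hγ
  field_simp
  rw [hμ']

end InteriorPoint

open InteriorPoint in
theorem inf_scaled_combined_residual_bound_general
    (n : ℕ) (hn : 1 ≤ n)
    (γ σmin σmax ω C₃ : ℝ)
    (hγ : γ ∈ Set.Ioo (0:ℝ) 1)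
    (hσ0 : 0 < σmin) (hσ1 : σmax < 1)
    (hC₃ : 1 ≤ C₃)
    (xk zk : Fin n → ℝ) (hxk : ∀ i, 0 < xk i) (hzk : ∀ i, 0 < zk i)
    (μk : ℝ) (hμk : μk = (∑ i, xk i * zk i) / n)
    (hNbr : ∀ i, γ * μk ≤ xk i * zk i ∧ xk i * zk i ≤ μk / γ)
    (σk : ℝ) (hσk : σmin ≤ σk ∧ σk ≤ σmax)
    (Δx Δz : Fin n → ℝ)
    (hNewton : ∀ i, zk i * Δx i + xk i * Δz i = σk * μk - xk i * zk i)
    (hDx : _root_.enorm (fun i => Real.sqrt (zk i / xk i) * Δx i) ≤ ω * n * Real.sqrt μk)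
    (hDz : _root_.enorm (fun i => Real.sqrt (xk i / zk i) * Δz i) ≤ ω * n * Real.sqrt μk)
    (αk : ℝ) (hαk : αk ∈ Set.Ioc (0:ℝ) 1)
    (xk1 zk1 : Fin n → ℝ)
    (hxk1 : xk1 = fun i => xk i + αk * Δx i)
    (hzk1 : zk1 = fun i => zk i + αk * Δz i)
    (μk1 : ℝ) (hμk1 : μk1 = (∑ i, xk1 i * zk1 i) / n)
    (σk1 : ℝ) (hσk1 : σmin ≤ σk1 ∧ σk1 ≤ σmax)
    (γ₁ : ℝ) (hγ₁ : |γ₁| ≤ C₃ * Real.sqrt n / αk)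
    (Δx' Δz' : Fin n → ℝ)
    (hQN : ∀ i, zk i * Δx' i + xk i * Δz' i
      = σk1 * μk1 - xk1 i * zk1 i - γ₁ * αk ^ 2 * (Δx i * Δz i))
    (α : ℝ) (hα : α ∈ Set.Icc (0:ℝ) 1) :
    _root_.enorm (fun i => (1 / Real.sqrt (xk i * zk i)) *
        (zk i * (αk * Δx i + α * Δx' i) + xk i * (αk * Δz i + α * Δz' i)))
      ≤ γ ^ (-(1:ℝ)/2) *
        ((σmax + γ⁻¹) * (αk + α) + (αk + C₃) * α * αk * ω ^ 2) *
        (n:ℝ) ^ ((5:ℝ)/2) * μk ^ ((1:ℝ)/2) := by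
  obtain ⟨hγ0, hγ1⟩ := hγ
  obtain ⟨hαk0, hαk1⟩ := hαk
  obtain ⟨hα0, -⟩ := hα
  have hn0 : (0:ℝ) < n := by exact_mod_cast hn
  have hμ0 : 0 < μk := hμk ▸ div_pos (sum_pos (fun i _ => mul_pos (hxk i) (hzk i))
    (univ_nonempty_iff.2 ⟨⟨0, hn⟩⟩)) hn0
  set p : Fin n → ℝ := fun i => Δx i * Δz i
  have hp : _root_.enorm p ≤ ω ^ 2 * n ^ 2 * μk := by
    calc _ ≤ _ := enorm_mul_le_of_diagonal_scaling hxk hzk Δx Δz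
      _ ≤ (ω * n * Real.sqrt μk) * (ω * n * Real.sqrt μk) :=
          mul_le_mul hDx hDz (enorm_nonneg _) ((enorm_nonneg _).trans hDx)
      _ = ω ^ 2 * n ^ 2 * μk := by linear_combination (ω ^ 2 * n ^ 2) * Real.mul_self_sqrt hμ0.le
  subst hxk1 hzk1
  have hμk1' := hμk1.trans (sum_mul_add_newton_step_div (by omega) αk hμk hNewton)
  have hres : ∀ i, zk i * (αk * Δx i + α * Δx' i) + xk i * (αk * Δz i + α * Δz' i)
      = (αk * (σk * μk - xk i * zk i) + α * (σk1 * ((1 - αk + αk * σk) * μk)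
          - ((1 - αk) * (xk i * zk i) + αk * (σk * μk))))
        + (α * αk ^ 2 * (σk1 * ((∑ j, p j) / n) - p i) + -(α * γ₁ * αk ^ 2) * p i) := fun i => by
    linear_combination αk * hNewton i + α * hQN i + (α * σk1) * hμk1'
      - α * mul_add_newton_step (α := αk) (hNewton i)
  calc _ ≤ _ := enorm_inv_sqrt_mul_le (mul_pos hγ0 hμ0) (fun i => (hNbr i).1) _
    _ ≤ ((σmax + γ⁻¹) * (αk + α) + (αk + C₃) * α * αk * ω ^ 2) * (n ^ 2 * Real.sqrt n) * μk
          / Real.sqrt (γ * μk) := by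
        gcongr
        simp only [hres]
        exact enorm_decomposed_residual_le hn hγ0 hγ1.le hμ0.le (hσ0.le.trans hσk.1) hσk.2
          (hσ0.le.trans hσk1.1) hσk1.2 hσ1 hαk0 hαk1 hα0 (by linarith) hγ₁
          (fun i => (mul_pos (hxk i) (hzk i)).le) (fun i => (hNbr i).2) hp
    _ = _ := (rpow_neg_half_mul_rpow_five_halves_mul_rpow_half hγ0 hμ0 _ hn0.le).symm

/-- Infeasible-case bound on the scaled combined third-row residual of the
composite (Newton + quasi-Newton) direction. -/
theorem inf_scaled_combined_residual_bound
    (n : ℕ) (hn : 1 ≤ n)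
    (γ σmin σmax ω C₃ : ℝ)
    (hγ : γ ∈ Set.Ioo (0:ℝ) 1)
    (hσ0 : 0 < σmin) (hσ : σmin ≤ σmax) (hσ1 : σmax < 1)
    (hω : 0 < ω) (hC₃ : 1 ≤ C₃)
    (xk zk : Fin n → ℝ) (hxk : ∀ i, 0 < xk i) (hzk : ∀ i, 0 < zk i)
    (μk : ℝ) (hμk : μk = (∑ i, xk i * zk i) / n)
    (hNbr : ∀ i, γ * μk ≤ xk i * zk i ∧ xk i * zk i ≤ μk / γ)
    (σk : ℝ) (hσk : σmin ≤ σk ∧ σk ≤ σmax)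
    (Δx Δz : Fin n → ℝ)
    (hNewton : ∀ i, zk i * Δx i + xk i * Δz i = σk * μk - xk i * zk i)
    (hDx : _root_.enorm (fun i => Real.sqrt (zk i / xk i) * Δx i) ≤ ω * n * Real.sqrt μk)
    (hDz : _root_.enorm (fun i => Real.sqrt (xk i / zk i) * Δz i) ≤ ω * n * Real.sqrt μk)
    (αk : ℝ) (hαk : αk ∈ Set.Ioc (0:ℝ) 1)
    (xk1 zk1 : Fin n → ℝ)
    (hxk1 : xk1 = fun i => xk i + αk * Δx i)
    (hzk1 : zk1 = fun i => zk i + αk * Δz i)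
    (μk1 : ℝ) (hμk1 : μk1 = (∑ i, xk1 i * zk1 i) / n) (hμdec : μk1 ≤ μk)
    (σk1 : ℝ) (hσk1 : σmin ≤ σk1 ∧ σk1 ≤ σmax)
    (γ₁ : ℝ) (hγ₁ : |γ₁| ≤ C₃ * Real.sqrt n / αk)
    (Δx' Δz' : Fin n → ℝ)
    (hQN : ∀ i, zk i * Δx' i + xk i * Δz' i
      = σk1 * μk1 - xk1 i * zk1 i - γ₁ * αk ^ 2 * (Δx i * Δz i))
    (α : ℝ) (hα : α ∈ Set.Icc (0:ℝ) 1) :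
    _root_.enorm (fun i => (1 / Real.sqrt (xk i * zk i)) *
        (zk i * (αk * Δx i + α * Δx' i) + xk i * (αk * Δz i + α * Δz' i)))
      ≤ γ ^ (-(1:ℝ)/2) *
        ((σmax + γ⁻¹) * (αk + α) + (αk + C₃) * α * αk * ω ^ 2) *
        (n:ℝ) ^ ((5:ℝ)/2) * μk ^ ((1:ℝ)/2) :=
  inf_scaled_combined_residual_bound_general n hn γ σmin σmax ω C₃ hγ hσ0 hσ1 hC₃ xk zk hxk hzk μk
    hμk hNbr σk hσk Δx Δz hNewton hDx hDz αk hαk xk1 zk1 hxk1 hzk1 μk1 hμk1 σk1 hσk1 γ₁ hγ₁ Δx' Δz'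
    hQN α hα
end

section
/- Infeasible-case quasi-Newton step inequalities: under the infeasible two-step setup, assume additionally that α_dec ∈ (0,1) satisfies α_dec + σ_max ≤ 1 − σ_min; that (1 − ᾱ_k)(x^k)ᵀz^k ≤ (x^{k+1})ᵀz^{k+1} ≤ (1 − α_dec·ᾱ_k)(x^k)ᵀz^k; that γμ_{k+1} ≤ x^{k+1}_i z^{k+1}_i ≤ μ_{k+1}/γ for all i; that ‖(D^k)⁻¹(ᾱ_kΔx^k + ᾱΔx′)‖ ≤ C₆·ᾱ_k·n^{5/2}·μ_k^{1/2} and ‖D^k(ᾱ_kΔz^k + ᾱΔz′)‖ ≤ C₆·ᾱ_k·n^{5/2}·μ_k^{1/2}, where C₆ = (σ_max + γ^{−1} + 8β)(1 + 2C₃^{−1})γ^{−1/2} with β ≥ 1. Define κ = 2ω² + C₆² and C₅ = C₃^{−1}σ_min / ( C₃^{−1}σ_min + ((1+γ)/(1−γ))·κ ). If ᾱ_k ∈ (0, min{1, ((1 + C₃)ω²)^{−1}, C₅/n⁵}] and ᾱ ∈ [(C₃C₅)^{−1}·n⁵·ᾱ_k², C₃^{−1}·ᾱ_k], then with x^{k+2}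 = x^{k+1} + ᾱΔx′, z^{k+2} = z^{k+1} + ᾱΔz′ and μ_{k+2} = ((x^{k+2})ᵀz^{k+2})/n: (i) (1 − ᾱ)(x^{k+1})ᵀz^{k+1} ≤ (x^{k+2})ᵀz^{k+2} ≤ (1 − α_dec·ᾱ)(x^{k+1})ᵀz^{k+1}, and (ii) γμ_{k+2} ≤ x^{k+2}_i z^{k+2}_i ≤ (1/γ)μ_{k+2} for every i. -/
/-!
Let `E_i` be the second-order term of the Newton and quasi-Newton steps combined. The quasi-Newton equation
gives the exact identity `x^{k+2}_i z^{k+2}_i = (1 - α) x^{k+1}_i z^{k+1}_i + α σ_{k+1} μ_{k+1} + E_i`,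
and Cauchy–Schwarz in the `D`-scaled norms bounds `|E_i|` and `|∑ E_i|` by `κ αk² n⁵ μk`. The
step-size window is chosen so that `(1 + γ)` times this bound is at most `(1 - γ) α σmin μ_{k+1}`:
the centering term absorbs the error, and both claims follow as for an exact centering step.
-/

open scoped BigOperators

/-- Euclidean norm of a finitely-indexed real vector. -/
noncomputable def euclNorm {ι : Type*} [Fintype ι] (v : ι → ℝ) : ℝ :=
  Real.sqrt (∑ i, v i ^ 2)

open Finset

lemma scaled_mul_scaled {x z : ℝ} (hx : 0 < x) (hz : 0 < z) (a b : ℝ) :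
    (Real.sqrt (z / x) * a) * (Real.sqrt (x / z) * b) = a * b := by
  rw [mul_mul_mul_comm, ← Real.sqrt_mul (div_nonneg hz.le hx.le),
    div_mul_div_cancel₀ hx.ne', div_self hz.ne', Real.sqrt_one, one_mul]

section EuclNorm

variable {ι : Type*} [Fintype ι]

lemma abs_le_euclNorm (u : ι → ℝ) (i : ι) : |u i| ≤ euclNorm u := by
  rw [← Real.sqrt_sq_eq_abs]
  exact Real.sqrt_le_sqrt (single_le_sum (fun j _ => sq_nonneg (u j)) (mem_univ i))

lemma abs_sum_mul_le_euclNorm_mul (u v : ι → ℝ) :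
    |∑ i, u i * v i| ≤ euclNorm u * euclNorm v := by
  calc |∑ i, u i * v i| ≤ ∑ i, |u i| * |v i| := by
        simpa only [abs_mul] using abs_sum_le_sum_abs (fun i => u i * v i) univ
    _ ≤ euclNorm u * euclNorm v := by
        simpa only [euclNorm, sq_abs] using
          Real.sum_mul_le_sqrt_mul_sqrt univ (fun i => |u i|) (fun i => |v i|)

variable {x z a b : ι → ℝ} {R : ℝ}

lemma abs_mul_le_sq_of_scaled_euclNorm_le (hx : ∀ i, 0 < x i) (hz : ∀ i, 0 < z i)
    (ha : euclNorm (fun i => Real.sqrt (z i / x i) * a i) ≤ R)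
    (hb : euclNorm (fun i => Real.sqrt (x i / z i) * b i) ≤ R) (i : ι) :
    |a i * b i| ≤ R ^ 2 := by
  rw [← scaled_mul_scaled (hx i) (hz i), abs_mul, sq]
  exact mul_le_mul ((abs_le_euclNorm _ i).trans ha) ((abs_le_euclNorm _ i).trans hb)
    (abs_nonneg _) ((abs_nonneg _).trans ((abs_le_euclNorm _ i).trans ha))

lemma abs_sum_mul_le_sq_of_scaled_euclNorm_le (hx : ∀ i, 0 < x i) (hz : ∀ i, 0 < z i)
    (ha : euclNorm (fun i => Real.sqrt (z i / x i) * a i) ≤ R)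
    (hb : euclNorm (fun i => Real.sqrt (x i / z i) * b i) ≤ R) :
    |∑ i, a i * b i| ≤ R ^ 2 := by
  rw [← sum_congr rfl fun i _ => scaled_mul_scaled (hx i) (hz i) (a i) (b i), sq]
  exact (abs_sum_mul_le_euclNorm_mul _ _).trans
    (mul_le_mul ha hb (Real.sqrt_nonneg _) ((Real.sqrt_nonneg _).trans ha))

end EuclNorm

/-- Second-order term of a Newton step of length `αk` followed by a quasi-Newton step of length `α`
whose right-hand side carries the correction `γ₁ αk² Δx Δz`. -/
def qnError (αk α γ₁ dx dz dx' dz' : ℝ) : ℝ :=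
  (αk * dx + α * dx') * (αk * dz + α * dz') - (1 + α * γ₁) * αk ^ 2 * (dx * dz)

lemma mul_eq_of_qn_step {x z dx dz dx' dz' αk α γ₁ s : ℝ}
    (hqn : z * dx' + x * dz' = s - (x + αk * dx) * (z + αk * dz) - γ₁ * αk ^ 2 * (dx * dz)) :
    (x + αk * dx + α * dx') * (z + αk * dz + α * dz')
      = (1 - α) * ((x + αk * dx) * (z + αk * dz)) + α * s + qnError αk α γ₁ dx dz dx' dz' := by
  unfold qnError
  linear_combination α * hqn

lemma abs_sub_mul_le {P Q c a N ω C μ : ℝ} (hN : 1 ≤ N) (ha : 0 ≤ a) (hμ : 0 ≤ μ)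
    (hP : |P| ≤ C ^ 2 * a * N ^ 5 * μ) (hQ : |Q| ≤ ω ^ 2 * N ^ 2 * μ) (hc : |c| ≤ 2 * N) :
    |P - c * a * Q| ≤ (2 * ω ^ 2 + C ^ 2) * a * N ^ 5 * μ := by
  have hcaQ : |c * a * Q| ≤ 2 * N * a * (ω ^ 2 * N ^ 2 * μ) := by
    rw [abs_mul, abs_mul, abs_of_nonneg ha]
    gcongr
  have hN35 : N ^ 3 ≤ N ^ 5 := pow_le_pow_right₀ hN (by norm_num)
  have : 0 ≤ ω ^ 2 * a * μ := by positivity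
  calc |P - c * a * Q| ≤ |P| + |c * a * Q| := abs_sub _ _
    _ ≤ C ^ 2 * a * N ^ 5 * μ + 2 * ω ^ 2 * a * μ * N ^ 3 := by linarith
    _ ≤ (2 * ω ^ 2 + C ^ 2) * a * N ^ 5 * μ := by nlinarith

section QNError

variable {ι : Type*} [Fintype ι] {x z dx dz dx' dz' : ι → ℝ} {αk α γ₁ N ω C μ : ℝ}

lemma qnError_bounds (hx : ∀ i, 0 < x i) (hz : ∀ i, 0 < z i) (hN : 1 ≤ N) (hμ : 0 ≤ μ)
    (hc : |1 + α * γ₁| ≤ 2 * N)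
    (hdx : euclNorm (fun i => Real.sqrt (z i / x i) * dx i) ≤ ω * N * Real.sqrt μ)
    (hdz : euclNorm (fun i => Real.sqrt (x i / z i) * dz i) ≤ ω * N * Real.sqrt μ)
    (hsx : euclNorm (fun i => Real.sqrt (z i / x i) * (αk * dx i + α * dx' i))
      ≤ C * αk * N ^ ((5:ℝ)/2) * μ ^ ((1:ℝ)/2))
    (hsz : euclNorm (fun i => Real.sqrt (x i / z i) * (αk * dz i + α * dz' i))
      ≤ C * αk * N ^ ((5:ℝ)/2) * μ ^ ((1:ℝ)/2)) :
    (∀ i, |qnError αk α γ₁ (dx i) (dz i) (dx' i) (dz' i)|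
        ≤ (2 * ω ^ 2 + C ^ 2) * αk ^ 2 * N ^ 5 * μ) ∧
      |∑ i, qnError αk α γ₁ (dx i) (dz i) (dx' i) (dz' i)|
        ≤ (2 * ω ^ 2 + C ^ 2) * αk ^ 2 * N ^ 5 * μ := by
  have hN0 : 0 ≤ N := zero_le_one.trans hN
  have hRd : (ω * N * Real.sqrt μ) ^ 2 = ω ^ 2 * N ^ 2 * μ := by
    rw [mul_pow, mul_pow, Real.sq_sqrt hμ]
  have hRs : (C * αk * N ^ ((5:ℝ)/2) * μ ^ ((1:ℝ)/2)) ^ 2 = C ^ 2 * αk ^ 2 * N ^ 5 * μ := by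
    rw [mul_pow, mul_pow, mul_pow, ← Real.rpow_mul_natCast hN0, ← Real.rpow_mul_natCast hμ]
    norm_num
  refine ⟨fun i => ?_, ?_⟩
  · refine abs_sub_mul_le hN (sq_nonneg αk) hμ ?_ ?_ hc
    · exact hRs ▸ abs_mul_le_sq_of_scaled_euclNorm_le hx hz hsx hsz i
    · exact hRd ▸ abs_mul_le_sq_of_scaled_euclNorm_le hx hz hdx hdz i
  · simp only [qnError, sum_sub_distrib, ← mul_sum]
    refine abs_sub_mul_le hN (sq_nonneg αk) hμ ?_ ?_ hc
    · exact hRs ▸ abs_sum_mul_le_sq_of_scaled_euclNorm_le hx hz hsx hsz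
    · exact hRd ▸ abs_sum_mul_le_sq_of_scaled_euclNorm_le hx hz hdx hdz

end QNError

lemma abs_one_add_mul_le {α γ₁ αk C₃ N : ℝ} (hN : 1 ≤ N) (hC₃ : 0 < C₃) (hαk : 0 < αk)
    (hα : 0 ≤ α) (hα' : α ≤ C₃⁻¹ * αk) (hγ₁ : |γ₁| ≤ C₃ * Real.sqrt N / αk) :
    |1 + α * γ₁| ≤ 2 * N := by
  have hαγ₁ : |α * γ₁| ≤ Real.sqrt N :=
    calc |α * γ₁| = α * |γ₁| := by rw [abs_mul, abs_of_nonneg hα]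
      _ ≤ C₃⁻¹ * αk * (C₃ * Real.sqrt N / αk) := by gcongr
      _ = Real.sqrt N := by field_simp
  have hsqrt : Real.sqrt N ≤ N := Real.sqrt_le_self_iff.2 (Or.inr hN)
  calc |1 + α * γ₁| ≤ 1 + |α * γ₁| := (abs_add_le _ _).trans_eq (by rw [abs_one])
    _ ≤ 2 * N := by linarith

/-- `C₅` is chosen so that `C₃ C₅ · (1+γ)/(1-γ) κ = σmin (1 - C₅)`. -/
lemma error_le_centering {γ σmin C₃ κ C₅ αk α N μ μ' : ℝ} (hγ : γ ∈ Set.Ioo (0:ℝ) 1)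
    (hσ : 0 < σmin) (hC₃ : 0 < C₃) (hκ : 0 ≤ κ)
    (hC₅ : C₅ = C₃⁻¹ * σmin / (C₃⁻¹ * σmin + (1 + γ) / (1 - γ) * κ))
    (hN : 1 ≤ N) (hαk : αk ≤ C₅ / N) (hα : (C₃ * C₅)⁻¹ * N * αk ^ 2 ≤ α)
    (hμ : 0 ≤ μ) (hμ' : (1 - αk) * μ ≤ μ') :
    (1 + γ) * (κ * αk ^ 2 * N * μ) ≤ (1 - γ) * (α * σmin * μ') := by
  obtain ⟨hγ0, hγ1⟩ := hγ
  have hγ' : 0 < 1 - γ := by linarith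
  set G := (1 + γ) / (1 - γ) * κ with hG
  have hG0 : 0 ≤ G := by positivity
  have hC₅0 : 0 < C₅ := hC₅ ▸ by positivity
  have hC₅G : C₃ * C₅ * G = σmin * (1 - C₅) := by
    rw [hC₅]; field_simp; ring
  have hαkC₅ : αk ≤ C₅ := hαk.trans (div_le_self hC₅0.le hN)
  have hα0 : 0 ≤ α := le_trans (by positivity) hα
  have hstep : N * αk ^ 2 ≤ C₃ * C₅ * α := by
    rwa [mul_assoc, inv_mul_le_iff₀ (by positivity)] at hα
  have hGκ : (1 + γ) * κ = (1 - γ) * G := by rw [hG]; field_simp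
  calc (1 + γ) * (κ * αk ^ 2 * N * μ) = (1 - γ) * (G * (N * αk ^ 2) * μ) := by
        linear_combination (αk ^ 2 * N * μ) * hGκ
    _ ≤ (1 - γ) * (G * (C₃ * C₅ * α) * μ) := by gcongr
    _ = (1 - γ) * (α * σmin * ((1 - C₅) * μ)) := by rw [← mul_assoc G, mul_comm G, hC₅G]; ring
    _ ≤ (1 - γ) * (α * σmin * ((1 - αk) * μ)) := by gcongr
    _ ≤ (1 - γ) * (α * σmin * μ') := by gcongr

section PerturbedCentering

variable {ι : Type*} [Fintype ι] {p q E : ι → ℝ} {α σ σmin μ B : ℝ}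

lemma sum_eq_of_step (hq : ∀ i, q i = (1 - α) * p i + α * (σ * μ) + E i) :
    ∑ i, q i = (1 - α) * ∑ i, p i + Fintype.card ι * (α * (σ * μ)) + ∑ i, E i := by
  simp only [hq, sum_add_distrib, ← mul_sum, sum_const, card_univ, nsmul_eq_mul]
  ring

variable [Nonempty ι]

lemma gap_bounds_of_step {σmax αdec γ : ℝ} (hq : ∀ i, q i = (1 - α) * p i + α * (σ * μ) + E i)
    (hμ : μ = (∑ i, p i) / Fintype.card ι) (hα : 0 ≤ α) (hμ0 : 0 ≤ μ)
    (hσ : σmin ≤ σ ∧ σ ≤ σmax) (hdec : αdec + σmax ≤ 1 - σmin)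
    (hE : |∑ i, E i| ≤ B) (hγ : γ ∈ Set.Ioo (0:ℝ) 1)
    (hB : (1 + γ) * B ≤ (1 - γ) * (α * σmin * μ)) :
    (1 - α) * ∑ i, p i ≤ ∑ i, q i ∧ ∑ i, q i ≤ (1 - αdec * α) * ∑ i, p i := by
  have hB0 : 0 ≤ B := (abs_nonneg _).trans hE
  replace hB : B ≤ α * σmin * μ := by nlinarith [hγ.1, hγ.2]
  have hn : (1 : ℝ) ≤ Fintype.card ι := by exact_mod_cast Fintype.card_pos
  have hp : ∑ i, p i = Fintype.card ι * μ := by rw [hμ]; field_simp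
  have hαμ : 0 ≤ α * μ := mul_nonneg hα hμ0
  have h1 : α * σmin * μ ≤ Fintype.card ι * (α * σmin * μ) :=
    le_mul_of_one_le_left (hB0.trans hB) hn
  have h2 : Fintype.card ι * (α * σmin * μ) ≤ Fintype.card ι * (α * (σ * μ)) := by
    nlinarith [mul_le_mul_of_nonneg_left hσ.1 hαμ]
  have h3 : Fintype.card ι * (α * (σ * μ)) ≤ Fintype.card ι * (α * ((1 - αdec - σmin) * μ)) := by
    nlinarith [mul_le_mul_of_nonneg_left (show σ ≤ 1 - αdec - σmin by linarith) hαμ]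
  rw [sum_eq_of_step hq, hp]
  constructor <;> nlinarith [abs_le.1 hE]

lemma nbhd_of_step {γ μ' : ℝ} (hq : ∀ i, q i = (1 - α) * p i + α * (σ * μ) + E i)
    (hμ : μ = (∑ i, p i) / Fintype.card ι) (hμ' : μ' = (∑ i, q i) / Fintype.card ι)
    (hγ : γ ∈ Set.Ioo (0:ℝ) 1) (hα : 0 ≤ α ∧ α ≤ 1) (hμ0 : 0 ≤ μ) (hσ : σmin ≤ σ)
    (hE : ∀ i, |E i| ≤ B) (hEs : |∑ i, E i| ≤ B)
    (hB : (1 + γ) * B ≤ (1 - γ) * (α * σmin * μ))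
    (hp : ∀ i, γ * μ ≤ p i ∧ p i ≤ μ / γ) (i : ι) :
    γ * μ' ≤ q i ∧ q i ≤ (1 / γ) * μ' := by
  obtain ⟨hγ0, hγ1⟩ := hγ
  have hn : (1 : ℝ) ≤ Fintype.card ι := by exact_mod_cast Fintype.card_pos
  have hμ'eq : μ' = (1 - α) * μ + α * (σ * μ) + (∑ i, E i) / Fintype.card ι := by
    rw [hμ', sum_eq_of_step hq, hμ]; field_simp
  have hEn : |(∑ i, E i) / Fintype.card ι| ≤ B := by
    rw [abs_div, Nat.abs_cast]
    exact (div_le_self (abs_nonneg _) hn).trans hEs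
  have hcentering : (1 + γ) * B ≤ (1 - γ) * (α * (σ * μ)) := by
    nlinarith [mul_le_mul_of_nonneg_left hσ (mul_nonneg hα.1 hμ0)]
  have hlow : 0 ≤ (1 - α) * (p i - γ * μ) := mul_nonneg (by linarith) (by linarith [hp i])
  have hup : 0 ≤ (1 - α) * (μ - γ * p i) :=
    mul_nonneg (by linarith) (by linarith [(le_div_iff₀' hγ0).1 (hp i).2])
  have := abs_le.1 (hE i)
  have := abs_le.1 hEn
  refine ⟨?_, ?_⟩
  · rw [hq, hμ'eq]; nlinarith
  · rw [one_div_mul_eq_div, le_div_iff₀' hγ0, hq, hμ'eq]; nlinarith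

theorem inf_qn_step_inequalities_general
    (n : ℕ) (hn : 1 ≤ n)
    (γ σmin σmax ω C₃ : ℝ)
    (hγ : γ ∈ Set.Ioo (0:ℝ) 1)
    (hσ0 : 0 < σmin)
    (hC₃ : 1 ≤ C₃)
    (xk zk xk1 zk1 : Fin n → ℝ)
    (hxk : ∀ i, 0 < xk i) (hzk : ∀ i, 0 < zk i)
    (μk μk1 : ℝ)
    (hμk : μk = (∑ i, xk i * zk i) / n)
    (hμk1 : μk1 = (∑ i, xk1 i * zk1 i) / n)
    (σk1 αk α : ℝ)
    (hσk1 : σmin ≤ σk1 ∧ σk1 ≤ σmax)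
    (Δx Δz : Fin n → ℝ)
    (hDx : euclNorm (fun i => Real.sqrt (zk i / xk i) * Δx i) ≤ ω * n * Real.sqrt μk)
    (hDz : euclNorm (fun i => Real.sqrt (xk i / zk i) * Δz i) ≤ ω * n * Real.sqrt μk)
    (hxk1 : xk1 = fun i => xk i + αk * Δx i)
    (hzk1 : zk1 = fun i => zk i + αk * Δz i)
    (γ₁ : ℝ) (hγ₁ : |γ₁| ≤ C₃ * Real.sqrt n / αk)
    (Δx' Δz' : Fin n → ℝ)
    (hQN : ∀ i, zk i * Δx' i + xk i * Δz' i
      = σk1 * μk1 - xk1 i * zk1 i - γ₁ * αk ^ 2 * (Δx i * Δz i))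
    -- additional hypotheses
    (αdec : ℝ)
    (hαdecσ : αdec + σmax ≤ 1 - σmin)
    (hmono1 : (1 - αk) * (∑ i, xk i * zk i) ≤ ∑ i, xk1 i * zk1 i)
    (hNbr1 : ∀ i, γ * μk1 ≤ xk1 i * zk1 i ∧ xk1 i * zk1 i ≤ μk1 / γ)
    (C₆ : ℝ)
    (hcomb1 : euclNorm (fun i => Real.sqrt (zk i / xk i) * (αk * Δx i + α * Δx' i))
      ≤ C₆ * αk * (n:ℝ) ^ ((5:ℝ)/2) * μk ^ ((1:ℝ)/2))
    (hcomb2 : euclNorm (fun i => Real.sqrt (xk i / zk i) * (αk * Δz i + α * Δz' i))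
      ≤ C₆ * αk * (n:ℝ) ^ ((5:ℝ)/2) * μk ^ ((1:ℝ)/2))
    (κ C₅ : ℝ)
    (hκ : κ = 2 * ω ^ 2 + C₆ ^ 2)
    (hC₅ : C₅ = C₃⁻¹ * σmin / (C₃⁻¹ * σmin + (1 + γ) / (1 - γ) * κ))
    (hαk : αk ∈ Set.Ioc (0:ℝ)
      (min 1 (min (((1 + C₃) * ω ^ 2)⁻¹) (C₅ / (n:ℝ) ^ 5))))
    (hα : α ∈ Set.Icc ((C₃ * C₅)⁻¹ * (n:ℝ) ^ 5 * αk ^ 2) (C₃⁻¹ * αk))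
    (xk2 zk2 : Fin n → ℝ)
    (hxk2 : xk2 = fun i => xk1 i + α * Δx' i)
    (hzk2 : zk2 = fun i => zk1 i + α * Δz' i)
    (μk2 : ℝ) (hμk2 : μk2 = (∑ i, xk2 i * zk2 i) / n) :
    ((1 - α) * (∑ i, xk1 i * zk1 i) ≤ ∑ i, xk2 i * zk2 i ∧
      (∑ i, xk2 i * zk2 i) ≤ (1 - αdec * α) * (∑ i, xk1 i * zk1 i)) ∧
    (∀ i, γ * μk2 ≤ xk2 i * zk2 i ∧ xk2 i * zk2 i ≤ (1 / γ) * μk2) := by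
  obtain ⟨hαk0, hαk⟩ := hαk
  have hN : (1 : ℝ) ≤ n := by exact_mod_cast hn
  have hC₃0 : 0 < C₃ := zero_lt_one.trans_le hC₃
  have hγ' : 0 < 1 - γ := by linarith [hγ.2]
  have hκ0 : 0 ≤ κ := hκ ▸ by positivity
  have hC₅0 : 0 < C₅ := hC₅ ▸ by have := hγ.1; positivity
  have hα0 : 0 ≤ α := le_trans (by positivity) hα.1
  have hα1 : α ≤ 1 := hα.2.trans <|
    (mul_le_of_le_one_left hαk0.le (inv_le_one_of_one_le₀ hC₃)).trans (hαk.trans (min_le_left _ _))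
  have hμk0 : 0 ≤ μk :=
    hμk ▸ div_nonneg (sum_nonneg fun i _ => (mul_pos (hxk i) (hzk i)).le) (by positivity)
  have hμk_le : (1 - αk) * μk ≤ μk1 := by
    rw [hμk, hμk1, ← mul_div_assoc]; exact div_le_div_of_nonneg_right hmono1 (by positivity)
  have hμk10 : 0 ≤ μk1 :=
    (mul_nonneg (by linarith [hαk.trans (min_le_left _ _)]) hμk0).trans hμk_le
  obtain ⟨hE, hEs⟩ := qnError_bounds hxk hzk hN hμk0
    (abs_one_add_mul_le hN hC₃0 hαk0 hα0 hα.2 hγ₁) hDx hDz hcomb1 hcomb2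
  rw [← hκ] at hE hEs
  have hB := error_le_centering hγ hσ0 hC₃0 hκ0 hC₅ (one_le_pow₀ hN)
    (hαk.trans ((min_le_right _ _).trans (min_le_right _ _))) hα.1 hμk0 hμk_le
  have hq : ∀ i, xk2 i * zk2 i = (1 - α) * (xk1 i * zk1 i) + α * (σk1 * μk1)
      + qnError αk α γ₁ (Δx i) (Δz i) (Δx' i) (Δz' i) := fun i => by
    subst xk2 zk2 xk1 zk1
    exact mul_eq_of_qn_step (hQN i)
  have : Nonempty (Fin n) := ⟨⟨0, hn⟩⟩
  have hcard : (Fintype.card (Fin n) : ℝ) = n := by rw [Fintype.card_fin]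
  exact ⟨gap_bounds_of_step hq (hcard ▸ hμk1) hα0 hμk10 hσk1 hαdecσ hEs hγ hB,
    nbhd_of_step hq (hcard ▸ hμk1) (hcard ▸ hμk2) hγ ⟨hα0, hα1⟩ hμk10 hσk1.1 hE hEs hB hNbr1⟩

/-- Infeasible-case quasi-Newton step inequalities. -/
theorem inf_qn_step_inequalities
    (n : ℕ) (hn : 1 ≤ n)
    (γ σmin σmax ω C₃ : ℝ)
    (hγ : γ ∈ Set.Ioo (0:ℝ) 1)
    (hσ0 : 0 < σmin) (hσ : σmin ≤ σmax) (hσ1 : σmax < 1)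
    (hω : 0 < ω) (hC₃ : 1 ≤ C₃)
    (xk zk xk1 zk1 : Fin n → ℝ)
    (hxk : ∀ i, 0 < xk i) (hzk : ∀ i, 0 < zk i)
    (hxk1pos : ∀ i, 0 < xk1 i) (hzk1pos : ∀ i, 0 < zk1 i)
    (μk μk1 : ℝ)
    (hμk : μk = (∑ i, xk i * zk i) / n)
    (hμk1 : μk1 = (∑ i, xk1 i * zk1 i) / n)
    (hNbr : ∀ i, γ * μk ≤ xk i * zk i ∧ xk i * zk i ≤ μk / γ)
    (σk σk1 αk α : ℝ)
    (hσk : σmin ≤ σk ∧ σk ≤ σmax) (hσk1 : σmin ≤ σk1 ∧ σk1 ≤ σmax)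
    (Δx Δz : Fin n → ℝ)
    (hNewton : ∀ i, zk i * Δx i + xk i * Δz i = σk * μk - xk i * zk i)
    (hDx : euclNorm (fun i => Real.sqrt (zk i / xk i) * Δx i) ≤ ω * n * Real.sqrt μk)
    (hDz : euclNorm (fun i => Real.sqrt (xk i / zk i) * Δz i) ≤ ω * n * Real.sqrt μk)
    (hxk1 : xk1 = fun i => xk i + αk * Δx i)
    (hzk1 : zk1 = fun i => zk i + αk * Δz i)
    (γ₁ : ℝ) (hγ₁ : |γ₁| ≤ C₃ * Real.sqrt n / αk)
    (Δx' Δz' : Fin n → ℝ)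
    (hQN : ∀ i, zk i * Δx' i + xk i * Δz' i
      = σk1 * μk1 - xk1 i * zk1 i - γ₁ * αk ^ 2 * (Δx i * Δz i))
    -- additional hypotheses
    (αdec : ℝ) (hαdec : αdec ∈ Set.Ioo (0:ℝ) 1)
    (hαdecσ : αdec + σmax ≤ 1 - σmin)
    (hmono1 : (1 - αk) * (∑ i, xk i * zk i) ≤ ∑ i, xk1 i * zk1 i)
    (hmono2 : (∑ i, xk1 i * zk1 i) ≤ (1 - αdec * αk) * (∑ i, xk i * zk i))
    (hNbr1 : ∀ i, γ * μk1 ≤ xk1 i * zk1 i ∧ xk1 i * zk1 i ≤ μk1 / γ)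
    (β C₆ : ℝ) (hβ : 1 ≤ β)
    (hC₆ : C₆ = (σmax + γ⁻¹ + 8 * β) * (1 + 2 * C₃⁻¹) * γ ^ (-(1:ℝ)/2))
    (hcomb1 : euclNorm (fun i => Real.sqrt (zk i / xk i) * (αk * Δx i + α * Δx' i))
      ≤ C₆ * αk * (n:ℝ) ^ ((5:ℝ)/2) * μk ^ ((1:ℝ)/2))
    (hcomb2 : euclNorm (fun i => Real.sqrt (xk i / zk i) * (αk * Δz i + α * Δz' i))
      ≤ C₆ * αk * (n:ℝ) ^ ((5:ℝ)/2) * μk ^ ((1:ℝ)/2))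
    (κ C₅ : ℝ)
    (hκ : κ = 2 * ω ^ 2 + C₆ ^ 2)
    (hC₅ : C₅ = C₃⁻¹ * σmin / (C₃⁻¹ * σmin + (1 + γ) / (1 - γ) * κ))
    (hαk : αk ∈ Set.Ioc (0:ℝ)
      (min 1 (min (((1 + C₃) * ω ^ 2)⁻¹) (C₅ / (n:ℝ) ^ 5))))
    (hα : α ∈ Set.Icc ((C₃ * C₅)⁻¹ * (n:ℝ) ^ 5 * αk ^ 2) (C₃⁻¹ * αk))
    (xk2 zk2 : Fin n → ℝ)
    (hxk2 : xk2 = fun i => xk1 i + α * Δx' i)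
    (hzk2 : zk2 = fun i => zk1 i + α * Δz' i)
    (μk2 : ℝ) (hμk2 : μk2 = (∑ i, xk2 i * zk2 i) / n) :
    ((1 - α) * (∑ i, xk1 i * zk1 i) ≤ ∑ i, xk2 i * zk2 i ∧
      (∑ i, xk2 i * zk2 i) ≤ (1 - αdec * α) * (∑ i, xk1 i * zk1 i)) ∧
    (∀ i, γ * μk2 ≤ xk2 i * zk2 i ∧ xk2 i * zk2 i ≤ (1 / γ) * μk2) :=
  inf_qn_step_inequalities_general n hn γ σmin σmax ω C₃ hγ hσ0 hC₃ xk zk xk1 zk1 hxk hzk μk μk1 hμk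
    hμk1 σk1 αk α hσk1 Δx Δz hDx hDz hxk1 hzk1 γ₁ hγ₁ Δx' Δz' hQN αdec hαdecσ hmono1 hNbr1 C₆ hcomb1
    hcomb2 κ C₅ hκ hC₅ hαk hα xk2 zk2 hxk2 hzk2 μk2 hμk2
end PerturbedCentering
end
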